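/- arXiv:1803.06243 — 6 statements merged into one kernel-verified Lean document; each statement's English description precedes it below -/
import Mathlib

section
/- Let A ⊂ X be nonempty and let f : X → ℝ be Lipschitz continuous of rank L on a neighborhood of A. Then f⁰(A;·) is the support function of ∂f(A): for every h ∈ X the supremum of ⟨a,h⟩ over a ∈ ∂f(A) is attained and f⁰(A;h) = max_{a ∈ ∂f(A)} ⟨a,h⟩. -/
open Filter Metric Set NormedSpace
open scoped NNReal Topology

variable {X : Type*} [NormedAddCommGroup X] [NormedSpace ℝ X]

/-- Clarke's generalized directional derivative
`f⁰(x;h) = limsup_{y→x, t↓0⁺} (f(y+th) − f(y))/t`. -/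
noncomputable def clarkeDeriv (f : X → ℝ) (x : X) (h : X) : ℝ :=
  Filter.limsup (fun p : X × ℝ => (f (p.1 + p.2 • h) - f p.1) / p.2)
    ((nhds x) ×ˢ (nhdsWithin 0 (Set.Ioi 0)))

/-- Clarke's generalized gradient `∂f(x) = {a ∈ X* : ⟨a,h⟩ ≤ f⁰(x;h) ∀ h}`. -/
def clarkeGrad (f : X → ℝ) (x : X) : Set (StrongDual ℝ X) :=
  {a | ∀ h : X, a h ≤ clarkeDeriv f x h}

section aux

variable {f : X → ℝ} {L : ℝ≥0} {U : Set X} {y : X}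

/-- The Clarke quotient filter. -/
def cF (y : X) : Filter (X × ℝ) := (nhds y) ×ˢ (nhdsWithin (0:ℝ) (Set.Ioi 0))

noncomputable def cq (f : X → ℝ) (h : X) : X × ℝ → ℝ :=
  fun p => (f (p.1 + p.2 • h) - f p.1) / p.2

lemma cq_ev_bound (hU : IsOpen U) (hL : LipschitzOnWith L f U) (hy : y ∈ U) (h : X) :
    ∀ᶠ p in cF y, |cq f h p| ≤ L * ‖h‖ := by
  obtain ⟨ε, εpos, hball⟩ := Metric.isOpen_iff.1 hU y hy
  have hδ : (0:ℝ) < ε / (2 * (‖h‖ + 1)) := by positivity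
  have h1 : ∀ᶠ z in 𝓝 y, z ∈ ball y (ε/2) := ball_mem_nhds y (by positivity)
  have h2 : ∀ᶠ t in 𝓝[>] (0:ℝ), t ∈ Ioo 0 (ε / (2 * (‖h‖ + 1))) :=
    Ioo_mem_nhdsGT_of_mem ⟨le_rfl, hδ⟩
  filter_upwards [h1.prod_inl (𝓝[>] (0:ℝ)), h2.prod_inr (𝓝 y)] with p hz ht
  obtain ⟨tpos, tlt⟩ := ht
  have hzU : p.1 ∈ U := hball (by
    have : dist p.1 y < ε := lt_of_lt_of_le hz (by linarith)
    exact this)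
  have hzhU : p.1 + p.2 • h ∈ U := by
    apply hball
    have : dist (p.1 + p.2 • h) y ≤ dist p.1 y + ‖p.2 • h‖ := by
      rw [dist_eq_norm, dist_eq_norm]
      calc ‖p.1 + p.2 • h - y‖ = ‖(p.1 - y) + p.2 • h‖ := by rw [add_sub_right_comm]
        _ ≤ ‖p.1 - y‖ + ‖p.2 • h‖ := norm_add_le _ _
    have hsm : ‖p.2 • h‖ ≤ (ε / (2 * (‖h‖ + 1))) * ‖h‖ := by
      rw [norm_smul, Real.norm_eq_abs, abs_of_pos tpos]
      exact mul_le_mul_of_nonneg_right tlt.le (norm_nonneg _)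
    have hh : (ε / (2 * (‖h‖ + 1))) * ‖h‖ ≤ ε / 2 := by
      rw [div_mul_eq_mul_div, div_le_div_iff₀ (by positivity) (by norm_num)]
      have h0 : (0:ℝ) ≤ ‖h‖ := norm_nonneg _
      nlinarith
    calc dist (p.1 + p.2 • h) y ≤ dist p.1 y + ‖p.2 • h‖ := this
      _ < ε/2 + ε/2 := by
          have := mem_ball.1 hz
          exact add_lt_add_of_lt_of_le this (hsm.trans hh)
      _ = ε := by ring
  have hdist : |f (p.1 + p.2 • h) - f p.1| ≤ L * (p.2 * ‖h‖) := by
    have := hL.dist_le_mul _ hzhU _ hzU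
    rw [Real.dist_eq, dist_eq_norm] at this
    simpa [norm_smul, Real.norm_eq_abs, abs_of_pos tpos] using this
  rw [cq, abs_div, abs_of_pos tpos, div_le_iff₀ tpos]
  calc |f (p.1 + p.2 • h) - f p.1| ≤ L * (p.2 * ‖h‖) := hdist
    _ = L * ‖h‖ * p.2 := by ring

end aux

section aux2

variable {f : X → ℝ} {L : ℝ≥0} {U : Set X} {y : X} {h : X}

instance cF_neBot (y : X) : (cF y).NeBot := by
  unfold cF; infer_instance

lemma clarkeDeriv_eq (f : X → ℝ) (y h : X) : clarkeDeriv f y h = limsup (cq f h) (cF y) := rfl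

lemma cq_bddAbove (hU : IsOpen U) (hL : LipschitzOnWith L f U) (hy : y ∈ U) (h : X) :
    IsBoundedUnder (· ≤ ·) (cF y) (cq f h) :=
  ⟨L * ‖h‖, eventually_map.2 <| (cq_ev_bound hU hL hy h).mono fun _ hp => (abs_le.1 hp).2⟩

lemma cq_bddBelow (hU : IsOpen U) (hL : LipschitzOnWith L f U) (hy : y ∈ U) (h : X) :
    IsBoundedUnder (· ≥ ·) (cF y) (cq f h) :=
  ⟨-(L * ‖h‖), eventually_map.2 <| (cq_ev_bound hU hL hy h).mono fun _ hp => (abs_le.1 hp).1⟩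

lemma clarkeDeriv_le (hU : IsOpen U) (hL : LipschitzOnWith L f U) (hy : y ∈ U) (h : X) :
    clarkeDeriv f y h ≤ L * ‖h‖ := by
  rw [clarkeDeriv_eq]
  exact limsup_le_of_le (cq_bddBelow hU hL hy h).isCoboundedUnder_le
    ((cq_ev_bound hU hL hy h).mono fun _ hp => (abs_le.1 hp).2)

lemma neg_le_clarkeDeriv (hU : IsOpen U) (hL : LipschitzOnWith L f U) (hy : y ∈ U) (h : X) :
    -(L * ‖h‖) ≤ clarkeDeriv f y h := by
  rw [clarkeDeriv_eq]
  exact le_limsup_of_frequently_le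
    (((cq_ev_bound hU hL hy h).mono fun _ hp => (abs_le.1 hp).1).frequently)
    (cq_bddAbove hU hL hy h)

lemma clarkeDeriv_zero (f : X → ℝ) (y : X) : clarkeDeriv f y 0 = 0 := by
  have : (fun p : X × ℝ => (f (p.1 + p.2 • (0:X)) - f p.1) / p.2) = fun _ => (0:ℝ) := by
    funext p; simp
  rw [clarkeDeriv, this, limsup_const]

end aux2

section aux3

variable {f : X → ℝ} {L : ℝ≥0} {U : Set X} {y : X}

lemma isBoundedUnder_map_iff {α β γ : Type*} {r : γ → γ → Prop} {φ : α → β} {u : β → γ}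
    {F : Filter α} : IsBoundedUnder r (Filter.map φ F) u ↔ IsBoundedUnder r F (u ∘ φ) := by
  unfold IsBoundedUnder
  rw [Filter.map_map]

lemma cq_tendsto_shift (y h₁ : X) :
    Tendsto (fun p : X × ℝ => (p.1 + p.2 • h₁, p.2)) (cF y) (cF (y : X)) := by
  unfold cF
  refine Tendsto.prodMk ?_ tendsto_snd
  simpa using tendsto_fst.add
    (((tendsto_snd (f := 𝓝 y) (g := 𝓝[>] (0:ℝ))).mono_right nhdsWithin_le_nhds).smul_const h₁)

lemma clarkeDeriv_add_le (hU : IsOpen U) (hL : LipschitzOnWith L f U) (hy : y ∈ U) (h₁ h₂ : X) :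
    clarkeDeriv f y (h₁ + h₂) ≤ clarkeDeriv f y h₁ + clarkeDeriv f y h₂ := by
  set φ : X × ℝ → X × ℝ := fun p => (p.1 + p.2 • h₁, p.2) with hφdef
  have hφ : Tendsto φ (cF y) (cF y) := cq_tendsto_shift y h₁
  have heq : cq f (h₁ + h₂) = (cq f h₂ ∘ φ) + cq f h₁ := by
    funext p
    simp only [cq, Function.comp_apply, Pi.add_apply, hφdef]
    rw [← add_div, sub_add_sub_cancel, smul_add, add_assoc]
  have hb2 : ∀ᶠ p in cF y, |cq f h₂ (φ p)| ≤ L * ‖h₂‖ := hφ.eventually (cq_ev_bound hU hL hy h₂)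
  have b1 : IsBoundedUnder (· ≥ ·) (cF y) (cq f h₂ ∘ φ) :=
    ⟨-(L * ‖h₂‖), eventually_map.2 <| hb2.mono fun _ hp => (abs_le.1 hp).1⟩
  have b2 : IsBoundedUnder (· ≤ ·) (cF y) (cq f h₂ ∘ φ) :=
    ⟨L * ‖h₂‖, eventually_map.2 <| hb2.mono fun _ hp => (abs_le.1 hp).2⟩
  rw [clarkeDeriv_eq, heq]
  refine le_trans (limsup_add_le b1 b2 (cq_bddBelow hU hL hy h₁).isCoboundedUnder_le
    (cq_bddAbove hU hL hy h₁)) ?_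
  rw [add_comm (clarkeDeriv f y h₁)]
  refine add_le_add ?_ le_rfl
  rw [clarkeDeriv_eq, limsup_comp]
  haveI : (Filter.map φ (cF y)).NeBot := (cF_neBot y).map φ
  exact limsup_le_limsup_of_le hφ
    ((_root_.isBoundedUnder_map_iff.2 b1).isCoboundedUnder_le) (cq_bddAbove hU hL hy h₂)

end aux3

section aux4

variable {f : X → ℝ} {L : ℝ≥0} {U : Set X} {y : X}

lemma cq_tendsto_mul (y : X) {c : ℝ} (hc : 0 < c) :
    Tendsto (fun p : X × ℝ => (p.1, c * p.2)) (cF y) (cF (y : X)) := by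
  unfold cF
  refine Tendsto.prodMk tendsto_fst ?_
  have hsnd : Tendsto (fun p : X × ℝ => p.2) (𝓝 y ×ˢ 𝓝[>] (0:ℝ)) (𝓝[>] (0:ℝ)) := tendsto_snd
  refine tendsto_nhdsWithin_of_tendsto_nhds_of_eventually_within _ ?_ ?_
  · have : Tendsto (fun t : ℝ => c * t) (𝓝[>] (0:ℝ)) (𝓝 0) := by
      simpa using ((continuous_const.mul continuous_id).tendsto (f := fun t : ℝ => c * t) (0:ℝ)).mono_left
        nhdsWithin_le_nhds
    exact this.comp hsnd
  · exact (hsnd.eventually eventually_mem_nhdsWithin).mono fun p hp => mul_pos hc hp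

lemma clarkeDeriv_smul_le (hU : IsOpen U) (hL : LipschitzOnWith L f U) (hy : y ∈ U)
    {c : ℝ} (hc : 0 < c) (h : X) :
    clarkeDeriv f y (c • h) ≤ c * clarkeDeriv f y h := by
  set ψ : X × ℝ → X × ℝ := fun p => (p.1, c * p.2) with hψdef
  have hψ : Tendsto ψ (cF y) (cF y) := cq_tendsto_mul y hc
  have heq : cq f (c • h) = fun p => c * (cq f h ∘ ψ) p := by
    funext p
    simp only [cq, Function.comp_apply, hψdef]
    rw [smul_smul, mul_comm p.2 c, ← mul_div_assoc, mul_div_mul_left _ _ hc.ne']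
  have hbd : ∀ᶠ p in cF y, |cq f h (ψ p)| ≤ L * ‖h‖ := hψ.eventually (cq_ev_bound hU hL hy h)
  have b1 : IsBoundedUnder (· ≥ ·) (cF y) (cq f h ∘ ψ) :=
    ⟨-(L * ‖h‖), eventually_map.2 <| hbd.mono fun _ hp => (abs_le.1 hp).1⟩
  have b2 : IsBoundedUnder (· ≤ ·) (cF y) (cq f h ∘ ψ) :=
    ⟨L * ‖h‖, eventually_map.2 <| hbd.mono fun _ hp => (abs_le.1 hp).2⟩
  have hmono : Monotone (fun x : ℝ => c * x) := fun a b hab => by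
    exact mul_le_mul_of_nonneg_left hab hc.le
  have hmap := hmono.map_limsup_of_continuousAt (F := cF y) (cq f h ∘ ψ)
    ((continuous_const.mul continuous_id).continuousAt) b2 b1.isCoboundedUnder_le
  rw [clarkeDeriv_eq, heq]
  have : limsup (fun p => c * (cq f h ∘ ψ) p) (cF y)
      = c * limsup (cq f h ∘ ψ) (cF y) := by
    rw [hmap]; rfl
  rw [this]
  refine mul_le_mul_of_nonneg_left ?_ hc.le
  rw [clarkeDeriv_eq, limsup_comp]
  haveI : (Filter.map ψ (cF y)).NeBot := (cF_neBot y).map ψ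
  exact limsup_le_limsup_of_le hψ
    ((_root_.isBoundedUnder_map_iff.2 b1).isCoboundedUnder_le) (cq_bddAbove hU hL hy h)

lemma clarkeDeriv_smul (hU : IsOpen U) (hL : LipschitzOnWith L f U) (hy : y ∈ U)
    {c : ℝ} (hc : 0 < c) (h : X) :
    clarkeDeriv f y (c • h) = c * clarkeDeriv f y h := by
  refine le_antisymm (clarkeDeriv_smul_le hU hL hy hc h) ?_
  have h2 := clarkeDeriv_smul_le hU hL hy (inv_pos.2 hc) (c • h)
  rw [inv_smul_smul₀ hc.ne'] at h2
  calc c * clarkeDeriv f y h ≤ c * (c⁻¹ * clarkeDeriv f y (c • h)) :=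
        mul_le_mul_of_nonneg_left h2 hc.le
    _ = clarkeDeriv f y (c • h) := by field_simp

end aux4

section aux5

variable {f : X → ℝ} {L : ℝ≥0} {U : Set X} {y : X}

lemma clarkeGrad_norm_le (hU : IsOpen U) (hL : LipschitzOnWith L f U) (hy : y ∈ U)
    {a : StrongDual ℝ X} (ha : a ∈ clarkeGrad f y) : ‖a‖ ≤ L := by
  refine ContinuousLinearMap.opNorm_le_bound a L.coe_nonneg fun x => ?_
  rw [Real.norm_eq_abs]
  refine abs_le.2 ⟨?_, (ha x).trans (clarkeDeriv_le hU hL hy x)⟩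
  have h2 : a (-x) ≤ (L : ℝ) * ‖x‖ := by
    have := (ha (-x)).trans (clarkeDeriv_le hU hL hy (-x))
    rwa [norm_neg] at this
  rw [map_neg] at h2
  linarith

lemma exists_clarkeGrad (hU : IsOpen U) (hL : LipschitzOnWith L f U) (hy : y ∈ U) (h : X) :
    ∃ a : StrongDual ℝ X, a ∈ clarkeGrad f y ∧ a h = clarkeDeriv f y h := by
  set N : X → ℝ := clarkeDeriv f y with hN
  have N_hom : ∀ c : ℝ, 0 < c → ∀ x, N (c • x) = c * N x := fun c hc x =>
    clarkeDeriv_smul hU hL hy hc x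
  have N_add : ∀ x z, N (x + z) ≤ N x + N z := fun x z => clarkeDeriv_add_le hU hL hy x z
  have N_zero : N 0 = 0 := clarkeDeriv_zero f y
  -- obtain a linear functional g ≤ N with g h = N h
  have main : ∃ g : X →ₗ[ℝ] ℝ, g h = N h ∧ ∀ x, g x ≤ N x := by
    by_cases hne : h = 0
    · obtain ⟨g, _, hg2⟩ := exists_extension_of_le_sublinear ⟨⊥, 0⟩ N N_hom N_add
        (fun x => by
          have hx0 : (x : X) = 0 := Submodule.mem_bot ℝ |>.1 x.2
          simp [hx0, N_zero])
      exact ⟨g, by rw [hne, map_zero, N_zero], hg2⟩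
    · obtain ⟨g, hg1, hg2⟩ := exists_extension_of_le_sublinear
        (LinearPMap.mkSpanSingleton h (N h) hne) N N_hom N_add
        (fun x => by
          rcases x with ⟨xv, hxv⟩
          obtain ⟨c, hc⟩ := Submodule.mem_span_singleton.1 hxv
          subst hc
          have happ : (LinearPMap.mkSpanSingleton h (N h) hne) ⟨c • h, hxv⟩ = c • N h :=
            LinearPMap.mkSpanSingleton'_apply _ _ _ c _
          rw [happ, smul_eq_mul]
          rcases lt_trichotomy c 0 with hc0 | hc0 | hc0
          · have hpos : (0:ℝ) < -c := by linarith
            have h1 : N (c • h + (-c) • h) ≤ N (c • h) + N ((-c) • h) := N_add _ _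
            rw [← add_smul, add_neg_cancel, zero_smul, N_zero, N_hom _ hpos] at h1
            nlinarith
          · simp [hc0, N_zero]
          · rw [N_hom c hc0])
      refine ⟨g, ?_, hg2⟩
      have := hg1 ⟨h, Submodule.mem_span_singleton_self h⟩
      rwa [LinearPMap.mkSpanSingleton_apply] at this
  obtain ⟨g, hgh, hgle⟩ := main
  have habs : ∀ x, ‖g x‖ ≤ (L : ℝ) * ‖x‖ := by
    intro x
    rw [Real.norm_eq_abs]
    refine abs_le.2 ⟨?_, (hgle x).trans (clarkeDeriv_le hU hL hy x)⟩
    have h2 : g (-x) ≤ (L : ℝ) * ‖x‖ := by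
      have := (hgle (-x)).trans (clarkeDeriv_le hU hL hy (-x))
      rwa [norm_neg] at this
    rw [map_neg] at h2
    linarith
  refine ⟨g.mkContinuous (L : ℝ) habs, fun k => ?_, ?_⟩
  · exact hgle k
  · exact hgh

end aux5

/-- Directional derivative of `f` on the set `A`: `f⁰(A;h) = sup_{y∈A} f⁰(y;h)`. -/
noncomputable def setDeriv (f : X → ℝ) (A : Set X) (h : X) : ℝ :=
  sSup ((fun y => clarkeDeriv f y h) '' A)

/-- Gradient of `f` on the set `A`: the weak*-closed convex hull of `⋃_{y∈A} ∂f(y)`. -/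
def setGrad (f : X → ℝ) (A : Set X) : Set (StrongDual ℝ X) :=
  {a | StrongDual.toWeakDual a ∈
    closure ((StrongDual.toWeakDual (𝕜 := ℝ) (E := X)) '' (convexHull ℝ (⋃ y ∈ A, clarkeGrad f y)))}

/-- Proposition 2.1(2), support function property: the supremum of `⟨a,h⟩` over
`a ∈ ∂f(A)` is attained and equals `f⁰(A;h)`. -/
theorem setDeriv_isGreatest_support
    [CompleteSpace X] (A : Set X) (hA : A.Nonempty) (f : X → ℝ) (L : ℝ≥0)
    (hf : ∃ U : Set X, IsOpen U ∧ A ⊆ U ∧ LipschitzOnWith L f U) :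
    ∀ h : X, IsGreatest ((fun a : StrongDual ℝ X => a h) '' setGrad f A) (setDeriv f A h) := by
  intro h
  obtain ⟨U, hU, hAU, hL⟩ := hf
  have hSne : ((fun y => clarkeDeriv f y h) '' A).Nonempty := hA.image _
  have hSbdd : BddAbove ((fun y => clarkeDeriv f y h) '' A) := by
    refine ⟨L * ‖h‖, ?_⟩
    rintro s ⟨y, hy, rfl⟩
    exact clarkeDeriv_le hU hL (hAU hy) h
  set m : ℝ := setDeriv f A h with hm
  set G : Set (StrongDual ℝ X) := ⋃ y ∈ A, clarkeGrad f y with hG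
  set K : Set (WeakDual ℝ X) :=
    ⇑(StrongDual.toWeakDual (𝕜 := ℝ) (E := X)) '' (convexHull ℝ G) with hK
  have hKconv : K = convexHull ℝ (⇑(StrongDual.toWeakDual (𝕜 := ℝ) (E := X)) '' G) := by
    have := (StrongDual.toWeakDual (𝕜 := ℝ) (E := X)).toLinearMap.image_convexHull G
    simpa [hK] using this
  -- the closed convex "half space"
  have hTclosed : IsClosed {b : WeakDual ℝ X | b h ≤ m} :=
    IsClosed.preimage (WeakDual.eval_continuous h) isClosed_Iic
  have hTconvex : Convex ℝ {b : WeakDual ℝ X | b h ≤ m} := by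
    intro b₁ hb₁ b₂ hb₂ θ σ hθ hσ hθσ
    show (θ • b₁ + σ • b₂) h ≤ m
    have happ : (θ • b₁ + σ • b₂) h = θ * b₁ h + σ * b₂ h := rfl
    rw [happ]
    calc θ * b₁ h + σ * b₂ h ≤ θ * m + σ * m :=
          add_le_add (mul_le_mul_of_nonneg_left hb₁ hθ) (mul_le_mul_of_nonneg_left hb₂ hσ)
      _ = m := by rw [← add_mul, hθσ, one_mul]
  have hGT : ⇑(StrongDual.toWeakDual (𝕜 := ℝ) (E := X)) '' G ⊆ {b : WeakDual ℝ X | b h ≤ m} := by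
    rintro _ ⟨a, haG, rfl⟩
    obtain ⟨y, hyA, hay⟩ := Set.mem_iUnion₂.1 haG
    show a h ≤ m
    exact (hay h).trans (le_csSup hSbdd ⟨y, hyA, rfl⟩)
  have hKT : closure K ⊆ {b : WeakDual ℝ X | b h ≤ m} :=
    closure_minimal (hKconv ▸ convexHull_min hGT hTconvex) hTclosed
  -- compactness of the closure
  have hGball : convexHull ℝ G ⊆ Metric.closedBall (0 : StrongDual ℝ X) L := by
    refine convexHull_min ?_ (convex_closedBall _ _)
    intro a haG
    obtain ⟨y, hyA, hay⟩ := Set.mem_iUnion₂.1 haG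
    exact mem_closedBall_zero_iff.2 (clarkeGrad_norm_le hU hL (hAU hyA) hay)
  have hKB : closure K ⊆ WeakDual.toStrongDual ⁻¹' Metric.closedBall (0 : StrongDual ℝ X) L := by
    refine closure_minimal ?_ (WeakDual.isCompact_closedBall (𝕜 := ℝ) (E := X) 0 L).isClosed
    rintro _ ⟨a, haconv, rfl⟩
    exact hGball haconv
  have hKcompact : IsCompact (closure K) :=
    (WeakDual.isCompact_closedBall (𝕜 := ℝ) (E := X) 0 L).of_isClosed_subset isClosed_closure hKB
  -- nonemptiness
  obtain ⟨y₀, hy₀⟩ := hA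
  obtain ⟨a₀, ha₀, _⟩ := exists_clarkeGrad hU hL (hAU hy₀) h
  have hKne : (closure K).Nonempty :=
    ⟨StrongDual.toWeakDual a₀, subset_closure (Set.mem_image_of_mem _
      (subset_convexHull ℝ G (Set.mem_biUnion hy₀ ha₀)))⟩
  -- maximum point
  obtain ⟨b, hbK, hbmax'⟩ := hKcompact.exists_isMaxOn hKne
    ((WeakDual.eval_continuous h).continuousOn)
  have hbmax : ∀ c ∈ closure K, (c : WeakDual ℝ X) h ≤ b h := fun c hc => hbmax' hc
  have hble : b h ≤ m := hKT hbK
  have hmle : m ≤ b h := by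
    rw [hm]
    refine csSup_le hSne ?_
    rintro s ⟨y, hyA, rfl⟩
    obtain ⟨a, haG, hah⟩ := exists_clarkeGrad hU hL (hAU hyA) h
    have hmem : StrongDual.toWeakDual a ∈ closure K :=
      subset_closure (Set.mem_image_of_mem _
        (subset_convexHull ℝ G (Set.mem_biUnion hyA haG)))
    calc clarkeDeriv f y h = a h := hah.symm
      _ ≤ b h := hbmax _ hmem
  have hbh : b h = m := le_antisymm hble hmle
  constructor
  · exact ⟨WeakDual.toStrongDual b, hbK, hbh⟩
  · rintro x ⟨a, haA, rfl⟩
    exact hKT haA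
end

section
/- Let A ⊂ X be nonempty and let f : X → ℝ be Lipschitz continuous of rank L on a neighborhood of A. Then ∂f(A) = {a ∈ X* : ⟨a,h⟩ ≤ f⁰(A;h) for all h ∈ X}. -/
open Filter Metric Set NormedSpace
open scoped NNReal

variable {X : Type*} [NormedAddCommGroup X] [NormedSpace ℝ X]

namespace ClarkeAux

/-- The difference quotient appearing in Clarke's directional derivative. -/
noncomputable def dq (f : X → ℝ) (h : X) : X × ℝ → ℝ :=
  fun p => (f (p.1 + p.2 • h) - f p.1) / p.2

/-- The filter over which the `limsup` is taken. -/
noncomputable def F (y : X) : Filter (X × ℝ) := (nhds y) ×ˢ (nhdsWithin 0 (Set.Ioi 0))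

instance (y : X) : (F y).NeBot := by
  have : (nhdsWithin (0:ℝ) (Set.Ioi 0)).NeBot := nhdsGT_neBot 0
  exact Filter.prod_neBot.2 ⟨inferInstance, this⟩

lemma clarkeDeriv_eq (f : X → ℝ) (y h : X) :
    clarkeDeriv f y h = Filter.limsup (dq f h) (F y) := rfl

lemma eventually_bound {f : X → ℝ} {L : ℝ≥0} {U : Set X} (hU : IsOpen U)
    (hf : LipschitzOnWith L f U) {y : X} (hy : y ∈ U) (h : X) :
    ∀ᶠ p in F y, |dq f h p| ≤ L * ‖h‖ := by
  obtain ⟨ε, εpos, hball⟩ := Metric.isOpen_iff.1 hU y hy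
  set δ : ℝ := ε / (2 * (‖h‖ + 1)) with hδ
  have hnorm : (0:ℝ) < ‖h‖ + 1 := by positivity
  have δpos : 0 < δ := by positivity
  have h1 : ball y (ε/2) ∈ nhds y := ball_mem_nhds _ (by positivity)
  have h2 : Set.Ioo (0:ℝ) δ ∈ nhdsWithin (0:ℝ) (Set.Ioi 0) :=
    Ioo_mem_nhdsGT_of_mem ⟨le_refl 0, δpos⟩
  filter_upwards [Filter.prod_mem_prod h1 h2] with p hp
  obtain ⟨hp1, hp2⟩ := hp
  have ht : 0 < p.2 := hp2.1
  have hmem1 : p.1 ∈ U := hball (by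
    have := mem_ball.1 hp1
    exact mem_ball.2 (by linarith))
  have hsn : ‖p.2 • h‖ = p.2 * ‖h‖ := by
    rw [norm_smul, Real.norm_eq_abs, abs_of_pos ht]
  have hlt : p.2 * ‖h‖ < ε / 2 := by
    have h3 : p.2 * ‖h‖ ≤ p.2 * (‖h‖ + 1) := by nlinarith
    have h4 : p.2 * (‖h‖ + 1) < δ * (‖h‖ + 1) := by nlinarith [hp2.2]
    have h5 : δ * (‖h‖ + 1) = ε / 2 := by
      rw [hδ]
      field_simp
    linarith
  have hmem2 : p.1 + p.2 • h ∈ U := hball (by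
    have := mem_ball.1 hp1
    have hd : dist (p.1 + p.2 • h) y ≤ dist (p.1 + p.2 • h) p.1 + dist p.1 y :=
      dist_triangle _ _ _
    have : dist (p.1 + p.2 • h) p.1 = ‖p.2 • h‖ := by
      rw [dist_eq_norm]; congr 1; abel
    exact mem_ball.2 (by
      rw [this] at hd; rw [hsn] at hd
      have := mem_ball.1 hp1
      linarith))
  have hdist : dist (f (p.1 + p.2 • h)) (f p.1) ≤ L * dist (p.1 + p.2 • h) p.1 :=
    hf.dist_le_mul _ hmem2 _ hmem1
  have hd2 : dist (p.1 + p.2 • h) p.1 = p.2 * ‖h‖ := by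
    rw [dist_eq_norm]
    rw [show p.1 + p.2 • h - p.1 = p.2 • h by abel]
    exact hsn
  rw [hd2, Real.dist_eq] at hdist
  have : |dq f h p| = |f (p.1 + p.2 • h) - f p.1| / p.2 := by
    rw [dq, abs_div, abs_of_pos ht]
  rw [this, div_le_iff₀ ht]
  calc |f (p.1 + p.2 • h) - f p.1| ≤ L * (p.2 * ‖h‖) := hdist
    _ = L * ‖h‖ * p.2 := by ring

variable {f : X → ℝ} {L : ℝ≥0} {U : Set X} {y : X}

lemma isBoundedUnder_le (hU : IsOpen U) (hf : LipschitzOnWith L f U) (hy : y ∈ U) (h : X) :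
    IsBoundedUnder (· ≤ ·) (F y) (dq f h) :=
  ⟨L * ‖h‖, eventually_map.mpr <| by
    filter_upwards [eventually_bound hU hf hy h] with p hp using (abs_le.1 hp).2⟩

lemma isBoundedUnder_ge (hU : IsOpen U) (hf : LipschitzOnWith L f U) (hy : y ∈ U) (h : X) :
    IsBoundedUnder (· ≥ ·) (F y) (dq f h) :=
  ⟨-(L * ‖h‖), eventually_map.mpr <| by
    filter_upwards [eventually_bound hU hf hy h] with p hp using (abs_le.1 hp).1⟩

lemma isCobounded_le (hU : IsOpen U) (hf : LipschitzOnWith L f U) (hy : y ∈ U) (h : X) :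
    IsCoboundedUnder (· ≤ ·) (F y) (dq f h) :=
  (isBoundedUnder_ge hU hf hy h).isCoboundedUnder_le

lemma clarkeDeriv_le_bound (hU : IsOpen U) (hf : LipschitzOnWith L f U) (hy : y ∈ U) (h : X) :
    clarkeDeriv f y h ≤ L * ‖h‖ := by
  rw [clarkeDeriv_eq]
  exact limsup_le_of_le (isCobounded_le hU hf hy h)
    (by filter_upwards [eventually_bound hU hf hy h] with p hp using (abs_le.1 hp).2)

lemma clarkeDeriv_zero (f : X → ℝ) (y : X) : clarkeDeriv f y 0 = 0 := by
  rw [clarkeDeriv_eq]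
  have : dq f (0 : X) = fun _ => (0:ℝ) := by
    funext p; simp [dq]
  rw [this, limsup_const]

/-- Positive homogeneity of the Clarke directional derivative. -/
lemma clarkeDeriv_smul (hU : IsOpen U) (hf : LipschitzOnWith L f U) (hy : y ∈ U)
    {c : ℝ} (hc : 0 < c) (h : X) :
    clarkeDeriv f y (c • h) = c * clarkeDeriv f y h := by
  have himg : (fun t : ℝ => c * t) '' Set.Ioi 0 = Set.Ioi 0 := by
    ext t
    simp only [Set.mem_image, Set.mem_Ioi]
    constructor
    · rintro ⟨s, hs, rfl⟩; positivity
    · intro ht; exact ⟨c⁻¹ * t, by positivity, by field_simp⟩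
  have hmul : Filter.map (fun t : ℝ => c * t) (nhdsWithin (0:ℝ) (Set.Ioi 0))
      = nhdsWithin (0:ℝ) (Set.Ioi 0) := by
    have := (Homeomorph.mulLeft₀ c hc.ne').isEmbedding.map_nhdsWithin_eq (Set.Ioi 0) 0
    simpa [himg] using this
  set m : X × ℝ → X × ℝ := fun p => (p.1, c * p.2) with hm
  have hmapF : Filter.map m (F y) = F y := by
    have : Filter.map m (F y) =
        (Filter.map id (nhds y)) ×ˢ
          (Filter.map (fun t : ℝ => c * t) (nhdsWithin 0 (Set.Ioi 0))) := by
      rw [Filter.prod_map_map_eq]; rfl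
    rw [this, Filter.map_id, hmul]; rfl
  have hpt : dq f (c • h) = fun p => c * dq f h (m p) := by
    funext p
    simp only [dq, hm]
    rw [smul_smul]
    by_cases hp : p.2 = 0
    · simp [hp]
    · rw [mul_comm p.2 c]
      field_simp
  rw [clarkeDeriv_eq, clarkeDeriv_eq, hpt]
  have hev : ∀ᶠ p in F y, |dq f h (m p)| ≤ L * ‖h‖ := by
    have : ∀ᶠ q in Filter.map m (F y), |dq f h q| ≤ L * ‖h‖ := by
      rw [hmapF]; exact eventually_bound hU hf hy h
    exact this
  have hb1 : IsBoundedUnder (· ≤ ·) (F y) (fun p => dq f h (m p)) :=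
    ⟨L * ‖h‖, eventually_map.mpr <| by
      filter_upwards [hev] with p hp using (abs_le.1 hp).2⟩
  have hb2 : IsCoboundedUnder (· ≤ ·) (F y) (fun p => dq f h (m p)) :=
    IsBoundedUnder.isCoboundedUnder_le
      ⟨-(L * ‖h‖), eventually_map.mpr <| by
        filter_upwards [hev] with p hp using (abs_le.1 hp).1⟩
  have hb3 : IsBoundedUnder (· ≤ ·) (F y) (fun p => c * dq f h (m p)) :=
    ⟨c * (L * ‖h‖), eventually_map.mpr <| by filter_upwards [hev] with p hp using
      (mul_le_mul_of_nonneg_left (abs_le.1 hp).2 hc.le)⟩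
  have hb4 : IsCoboundedUnder (· ≤ ·) (F y) (fun p => c * dq f h (m p)) :=
    IsBoundedUnder.isCoboundedUnder_le
      ⟨c * (-(L * ‖h‖)), eventually_map.mpr <| by filter_upwards [hev] with p hp using
        (mul_le_mul_of_nonneg_left (abs_le.1 hp).1 hc.le)⟩
  have key := (OrderIso.mulLeft₀ c hc).limsup_apply (f := F y)
      (u := fun p => dq f h (m p)) hb1 hb2 hb3 hb4
  simp only [OrderIso.mulLeft₀_apply] at key
  rw [← key]
  congr 1
  have : (fun p => dq f h (m p)) = dq f h ∘ m := rfl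
  rw [this, limsup_comp, hmapF]

/-- Subadditivity of the Clarke directional derivative. -/
lemma clarkeDeriv_add_le (hU : IsOpen U) (hf : LipschitzOnWith L f U) (hy : y ∈ U) (h k : X) :
    clarkeDeriv f y (h + k) ≤ clarkeDeriv f y h + clarkeDeriv f y k := by
  set m : X × ℝ → X × ℝ := fun p => (p.1 + p.2 • k, p.2) with hm
  have htend : Filter.Tendsto m (F y) (F y) := by
    apply Filter.Tendsto.prodMk
    · have h1 : Filter.Tendsto (fun p : X × ℝ => p.1 + p.2 • k) (nhds (y, (0:ℝ))) (nhds y) := by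
        have : Continuous fun p : X × ℝ => p.1 + p.2 • k :=
          continuous_fst.add (continuous_snd.smul continuous_const)
        simpa using this.tendsto (y, (0:ℝ))
      exact h1.mono_left (by
        rw [nhds_prod_eq]
        exact Filter.prod_mono le_rfl nhdsWithin_le_nhds)
    · exact tendsto_snd
  have hpt : dq f (h + k) = fun p => dq f k p + dq f h (m p) := by
    funext p
    simp only [dq, hm, smul_add]
    by_cases hp : p.2 = 0
    · simp [hp]
    · rw [← add_div]
      congr 1
      abel_nf
  rw [clarkeDeriv_eq, clarkeDeriv_eq, clarkeDeriv_eq, hpt]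
  have hev : ∀ᶠ p in F y, |dq f h (m p)| ≤ L * ‖h‖ :=
    htend.eventually (eventually_bound hU hf hy h)
  have hb1 : IsBoundedUnder (· ≤ ·) (F y) (fun p => dq f h (m p)) :=
    ⟨L * ‖h‖, eventually_map.mpr <| by
      filter_upwards [hev] with p hp using (abs_le.1 hp).2⟩
  have hb2 : IsCoboundedUnder (· ≤ ·) (F y) (fun p => dq f h (m p)) :=
    IsBoundedUnder.isCoboundedUnder_le
      ⟨-(L * ‖h‖), eventually_map.mpr <| by
        filter_upwards [hev] with p hp using (abs_le.1 hp).1⟩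
  have step1 : Filter.limsup (fun p => dq f k p + dq f h (m p)) (F y) ≤
      Filter.limsup (dq f k) (F y) + Filter.limsup (fun p => dq f h (m p)) (F y) := by
    have := limsup_add_le (f := F y) (u := dq f k) (v := fun p => dq f h (m p))
      (isBoundedUnder_ge hU hf hy k) (isBoundedUnder_le hU hf hy k) hb2 hb1
    simpa [Pi.add_def] using this
  have step2 : Filter.limsup (fun p => dq f h (m p)) (F y) ≤ Filter.limsup (dq f h) (F y) := by
    have hco : IsCoboundedUnder (· ≤ ·) (Filter.map m (F y)) (dq f h) := by
      refine IsBoundedUnder.isCoboundedUnder_le ?_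
      · exact ⟨-(L * ‖h‖), eventually_map.mpr <| eventually_map.mpr <| by
          filter_upwards [hev] with p hp using (abs_le.1 hp).1⟩
    have : Filter.limsup (fun p => dq f h (m p)) (F y)
        = Filter.limsup (dq f h) (Filter.map m (F y)) := by
      rw [show (fun p => dq f h (m p)) = dq f h ∘ m from rfl, limsup_comp]
    rw [this]
    exact limsup_le_limsup_of_le htend hco (isBoundedUnder_le hU hf hy h)
  calc Filter.limsup (fun p => dq f k p + dq f h (m p)) (F y)
      ≤ Filter.limsup (dq f k) (F y) + Filter.limsup (fun p => dq f h (m p)) (F y) := step1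
    _ ≤ Filter.limsup (dq f h) (F y) + Filter.limsup (dq f k) (F y) := by
        have := step2; linarith

lemma neg_clarkeDeriv_le (hU : IsOpen U) (hf : LipschitzOnWith L f U) (hy : y ∈ U) (h : X) :
    -clarkeDeriv f y h ≤ clarkeDeriv f y (-h) := by
  have h0 : (0:ℝ) = clarkeDeriv f y 0 := (clarkeDeriv_zero f y).symm
  have := clarkeDeriv_add_le hU hf hy h (-h)
  rw [add_neg_cancel] at this
  rw [← h0] at this
  linarith

/-- Existence of a supporting functional in the Clarke gradient attaining
the directional derivative in direction `h`. -/
lemma exists_grad_eq (hU : IsOpen U) (hf : LipschitzOnWith L f U) (hy : y ∈ U) (h : X) :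
    ∃ g : StrongDual ℝ X, g ∈ clarkeGrad f y ∧ g h = clarkeDeriv f y h := by
  set p : X → ℝ := clarkeDeriv f y with hpdef
  have p_hom : ∀ c : ℝ, 0 < c → ∀ x, p (c • x) = c * p x := fun c hc x =>
    clarkeDeriv_smul hU hf hy hc x
  have p_add : ∀ x z, p (x + z) ≤ p x + p z := fun x z => clarkeDeriv_add_le hU hf hy x z
  have p_bound : ∀ x, p x ≤ L * ‖x‖ := fun x => clarkeDeriv_le_bound hU hf hy x
  have p_neg : ∀ x, -p x ≤ p (-x) := fun x => neg_clarkeDeriv_le hU hf hy x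
  have main : ∀ h' : X, h' ≠ 0 → ∃ g : StrongDual ℝ X, g ∈ clarkeGrad f y ∧ g h' = p h' := by
    intro h' hne
    have hdom : ∀ z : (LinearPMap.mkSpanSingleton h' (p h') hne (K := ℝ) (L := ℝ) (σ := RingHom.id ℝ)).domain,
        LinearPMap.mkSpanSingleton h' (p h') hne (K := ℝ) (L := ℝ) (σ := RingHom.id ℝ) z ≤ p z := by
      rintro ⟨z, hz⟩
      have hz' : z ∈ Submodule.span ℝ {h'} := by
        rw [LinearPMap.domain_mkSpanSingleton] at hz; exact hz
      obtain ⟨c, rfl⟩ := Submodule.mem_span_singleton.1 hz'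
      have happ : LinearPMap.mkSpanSingleton h' (p h') hne (K := ℝ) (L := ℝ) (σ := RingHom.id ℝ) ⟨c • h', hz⟩ = c • p h' :=
        LinearPMap.mkSpanSingleton'_apply h' (p h') _ c _
      rw [happ]
      show c • p h' ≤ p (c • h')
      rcases lt_trichotomy c 0 with hc | hc | hc
      · have hch : c • h' = (-c) • (-h') := by rw [neg_smul, smul_neg, neg_neg]
        rw [hch, p_hom (-c) (by linarith) (-h')]
        have hnc : (0:ℝ) < -c := by linarith
        calc c • p h' = c * p h' := rfl
          _ = (-c) * (-(p h')) := by ring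
          _ ≤ (-c) * p (-h') := mul_le_mul_of_nonneg_left (p_neg h') hnc.le
      · subst hc; simp [clarkeDeriv_zero, hpdef]
      · rw [p_hom c hc h']; exact le_of_eq rfl
    obtain ⟨g, hg1, hg2⟩ := exists_extension_of_le_sublinear
      (LinearPMap.mkSpanSingleton h' (p h') hne (K := ℝ) (L := ℝ) (σ := RingHom.id ℝ)) p p_hom p_add hdom
    have hgh : g h' = p h' := by
      have hmem : h' ∈ (LinearPMap.mkSpanSingleton h' (p h') hne (K := ℝ) (L := ℝ) (σ := RingHom.id ℝ)).domain := by
        rw [LinearPMap.domain_mkSpanSingleton]; exact Submodule.mem_span_singleton_self h'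
      have h1 := hg1 ⟨h', hmem⟩
      rw [show ((⟨h', hmem⟩ : (LinearPMap.mkSpanSingleton h' (p h') hne (K := ℝ) (L := ℝ) (σ := RingHom.id ℝ)).domain) : X)
        = h' from rfl] at h1
      rw [h1]
      exact LinearPMap.mkSpanSingleton_apply ℝ ℝ (σ := RingHom.id ℝ) hne (p h')
    have hbd : ∀ x, ‖g x‖ ≤ (L:ℝ) * ‖x‖ := by
      intro x
      rw [Real.norm_eq_abs, abs_le]
      constructor
      · have h1 : g (-x) ≤ p (-x) := hg2 (-x)
        have h2 : p (-x) ≤ L * ‖-x‖ := p_bound (-x)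
        rw [norm_neg] at h2
        have : g (-x) = -g x := by rw [map_neg]
        linarith [this ▸ h1]
      · exact le_trans (hg2 x) (p_bound x)
    set G : StrongDual ℝ X := LinearMap.mkContinuous g (L:ℝ) hbd with hG
    refine ⟨G, fun k => ?_, ?_⟩
    · exact hg2 k
    · exact hgh
  by_cases hne : h = 0
  · subst hne
    by_cases htriv : ∃ h' : X, h' ≠ 0
    · obtain ⟨h', hne'⟩ := htriv
      obtain ⟨g, hg, _⟩ := main h' hne'
      exact ⟨g, hg, by rw [map_zero, hpdef, clarkeDeriv_zero]⟩
    · push_neg at htriv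
      refine ⟨0, fun k => ?_, by rw [hpdef]; simp [clarkeDeriv_zero]⟩
      rw [htriv k, clarkeDeriv_zero]
      simp
  · exact main h hne

end ClarkeAux

/-- Every continuous linear functional on the weak-* dual is evaluation at a point. -/
lemma weakDual_functional_exists_eval (φ : WeakDual ℝ X →L[ℝ] ℝ) :
    ∃ x : X, ∀ w : WeakDual ℝ X, φ w = w x := by
  have : Nonempty X := ⟨0⟩
  set p : X → Seminorm ℝ (WeakDual ℝ X) := (topDualPairing ℝ X).toSeminormFamily with hp
  have hws : WithSeminorms p := (topDualPairing ℝ X).weakBilin_withSeminorms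
  set q : Seminorm ℝ (WeakDual ℝ X) := LinearMap.toSeminorm (φ : WeakDual ℝ X →ₗ[ℝ] ℝ) with hq
  have hqc : Continuous q := by
    have : Continuous fun w : WeakDual ℝ X => ‖φ w‖ := φ.continuous.norm
    exact this
  obtain ⟨s, C, hC, hle⟩ := Seminorm.bound_of_continuous hws q hqc
  set Lm : {x // x ∈ s} → (WeakDual ℝ X) →ₗ[ℝ] ℝ := fun i =>
    { toFun := fun w => w (i : X)
      map_add' := fun a b => rfl
      map_smul' := fun c a => rfl } with hLm
  have hker : (⨅ i, LinearMap.ker (Lm i)) ≤ LinearMap.ker (φ : WeakDual ℝ X →ₗ[ℝ] ℝ) := by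
    intro w hw
    simp only [Submodule.mem_iInf, LinearMap.mem_ker] at hw ⊢
    have hsup : (s.sup p) w ≤ 0 := by
      apply Seminorm.finset_sup_apply_le le_rfl
      intro i hi
      have := hw ⟨i, hi⟩
      simp only [hLm, LinearMap.coe_mk, AddHom.coe_mk] at this
      have hpix : p i w = ‖w i‖ := rfl
      rw [hpix, show w i = 0 from this, norm_zero]
    have := hle w
    simp only [hq, Seminorm.smul_apply, LinearMap.toSeminorm_apply,
      NNReal.smul_def, smul_eq_mul] at this
    have h0 : ‖φ w‖ ≤ 0 := le_trans this (by
      have : (C : ℝ) * (s.sup p) w ≤ (C : ℝ) * 0 :=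
        mul_le_mul_of_nonneg_left hsup C.2
      simpa using this)
    have := norm_le_zero_iff.1 h0
    exact this
  have hmem := mem_span_of_iInf_ker_le_ker hker
  obtain ⟨c, hc⟩ := (Submodule.mem_span_range_iff_exists_fun ℝ).1 hmem
  refine ⟨∑ i, c i • (i : X), fun w => ?_⟩
  have := congrArg (fun g : (WeakDual ℝ X) →ₗ[ℝ] ℝ => g w) hc
  simp only [LinearMap.coe_sum, Finset.sum_apply, LinearMap.smul_apply, hLm,
    LinearMap.coe_mk, AddHom.coe_mk, smul_eq_mul] at this
  rw [show φ w = ((φ : WeakDual ℝ X →ₗ[ℝ] ℝ) w) from rfl, ← this]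
  rw [map_sum]
  congr 1
  funext i
  rw [map_smul]
  rfl

/-- Proposition 2.1(3): `∂f(A) = {a ∈ X* : ⟨a,h⟩ ≤ f⁰(A;h) for all h}`. -/
theorem setGrad_eq_support_characterization
    [CompleteSpace X] (A : Set X) (hA : A.Nonempty) (f : X → ℝ) (L : ℝ≥0)
    (hf : ∃ U : Set X, IsOpen U ∧ A ⊆ U ∧ LipschitzOnWith L f U) :
    setGrad f A = {a : StrongDual ℝ X | ∀ h : X, a h ≤ setDeriv f A h} := by
  obtain ⟨U, hU, hAU, hfU⟩ := hf
  ext a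
  simp only [Set.mem_setOf_eq]
  constructor
  · intro ha h
    have hbddA : BddAbove ((fun y => clarkeDeriv f y h) '' A) := by
      refine ⟨L * ‖h‖, ?_⟩
      rintro _ ⟨y, hy, rfl⟩
      exact ClarkeAux.clarkeDeriv_le_bound hU hfU (hAU hy) h
    set S : Set (WeakDual ℝ X) := {w | w h ≤ setDeriv f A h} with hS
    have hSclosed : IsClosed S := isClosed_le (WeakDual.eval_continuous h) continuous_const
    have hlin : IsLinearMap ℝ (fun b : StrongDual ℝ X => b h) :=
      ⟨fun u v => rfl, fun c u => rfl⟩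
    have hT : Convex ℝ {b : StrongDual ℝ X | b h ≤ setDeriv f A h} :=
      convex_halfSpace_le hlin _
    have hhull : convexHull ℝ (⋃ y ∈ A, clarkeGrad f y) ⊆
        {b : StrongDual ℝ X | b h ≤ setDeriv f A h} := by
      apply convexHull_min _ hT
      intro b hb
      obtain ⟨y, hy, hby⟩ := Set.mem_iUnion₂.1 hb
      have h1 : b h ≤ clarkeDeriv f y h := hby h
      have h2 : clarkeDeriv f y h ≤ setDeriv f A h :=
        le_csSup hbddA ⟨y, hy, rfl⟩
      exact le_trans h1 h2
    have hsub : (StrongDual.toWeakDual (𝕜 := ℝ) (E := X)) ''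
        (convexHull ℝ (⋃ y ∈ A, clarkeGrad f y)) ⊆ S := by
      rintro _ ⟨b, hb, rfl⟩
      exact hhull hb
    have := closure_minimal hsub hSclosed ha
    exact this
  · intro ha
    by_contra hnot
    have hconv : Convex ℝ (closure ((StrongDual.toWeakDual (𝕜 := ℝ) (E := X)) ''
        (convexHull ℝ (⋃ y ∈ A, clarkeGrad f y)))) := by
      refine Convex.closure ?_
      exact (convex_convexHull ℝ _).is_linear_image
        ⟨fun u v => rfl, fun c u => rfl⟩
    have hlcs : LocallyConvexSpace ℝ (WeakDual ℝ X) :=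
      WeakBilin.locallyConvexSpace (B := topDualPairing ℝ X)
    obtain ⟨φ, u, hφ1, hφ2⟩ :=
      geometric_hahn_banach_closed_point hconv isClosed_closure hnot
    obtain ⟨x, hx⟩ := weakDual_functional_exists_eval φ
    have hkey : ∀ y ∈ A, clarkeDeriv f y x ≤ u := by
      intro y hy
      obtain ⟨g, hg, hgx⟩ := ClarkeAux.exists_grad_eq hU hfU (hAU hy) x
      have hgmem : StrongDual.toWeakDual g ∈ closure ((StrongDual.toWeakDual (𝕜 := ℝ) (E := X)) ''
          (convexHull ℝ (⋃ y ∈ A, clarkeGrad f y))) :=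
        subset_closure ⟨g, subset_convexHull ℝ _ (Set.mem_iUnion₂.2 ⟨y, hy, hg⟩), rfl⟩
      have hlt := hφ1 _ hgmem
      rw [hx (StrongDual.toWeakDual g)] at hlt
      have : (StrongDual.toWeakDual g) x = g x := rfl
      rw [this, hgx] at hlt
      exact hlt.le
    have hsd : setDeriv f A x ≤ u := by
      apply csSup_le (hA.image _)
      rintro _ ⟨y, hy, rfl⟩
      exact hkey y hy
    have h1 : a x ≤ setDeriv f A x := ha x
    have h2' : u < a x := lt_of_lt_of_eq hφ2 (hx (StrongDual.toWeakDual a))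
    linarith
end

section
/- Let f : X → ℝ be locally Lipschitz continuous, let h_k → h in X, and let A_k, A ⊂ X be nonempty with A compact and A_k → A in the Hausdorff metric, i.e. d(A_k,A) := inf{δ > 0 : A ⊂ B_δ(A_k) and A_k ⊂ B_δ(A)} → 0 as k → ∞. Then limsup_{k→∞} f⁰(A_k;h_k) ≤ f⁰(A;h). -/
open Filter Metric Set NormedSpace
open scoped NNReal

variable {X : Type*} [NormedAddCommGroup X] [NormedSpace ℝ X]

open scoped Topology

/-! For a Lipschitz constant `K` of `f` near `x`, the difference quotients of `f` in directions
`h` and `h'` differ by at most `K‖h - h'‖` near `(x, 0⁺)`. Hence `(x, h) ↦ f⁰(x;h)` is upper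
semicontinuous and locally bounded below on `X × X`, so on some neighbourhood of the compact set
`A₀ × {h₀}` it is bounded below and stays below `f⁰(A₀;h₀) + ε`. Hausdorff convergence puts all
points `(w, h_k)` with `w ∈ A_k` into any such neighbourhood once `k` is large. -/

lemma eventually_eventually_nhds_prod {α β : Type*} [TopologicalSpace α] {l : Filter β} {x : α}
    {P : α × β → Prop} (h : ∀ᶠ p in 𝓝 x ×ˢ l, P p) : ∀ᶠ z in 𝓝 x, ∀ᶠ p in 𝓝 z ×ˢ l, P p := by
  obtain ⟨U, hU, T, hT, hUT⟩ := mem_prod_iff.1 h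
  filter_upwards [eventually_mem_nhds_iff.2 hU] with z hz
  exact mem_of_superset (prod_mem_prod hz hT) hUT

lemma IsCompact.exists_eventually_nhdsSet_le {Y : Type*} [TopologicalSpace Y] {K : Set Y}
    (hK : IsCompact K) {g : Y → ℝ} (hg : ∀ x ∈ K, ∃ C, ∀ᶠ y in 𝓝 x, C ≤ g y) :
    ∃ C, ∀ᶠ y in 𝓝ˢ K, C ≤ g y := by
  have hcover : K ⊆ ⋃ n : ℕ, interior {y | -(n : ℝ) ≤ g y} := by
    intro x hx
    obtain ⟨C, hC⟩ := hg x hx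
    obtain ⟨n, hn⟩ := exists_nat_ge (-C)
    exact mem_iUnion.2 ⟨n, mem_interior_iff_mem_nhds.2 (hC.mono fun y hy =>
      show -(n : ℝ) ≤ g y by linarith)⟩
  obtain ⟨n, hn⟩ := hK.elim_directed_cover _ (fun _ => isOpen_interior) hcover
    (Monotone.directed_le fun m n hmn => interior_mono fun y (hy : -(m : ℝ) ≤ g y) =>
      show -(n : ℝ) ≤ g y by linarith [(Nat.cast_le (α := ℝ)).2 hmn])
  exact ⟨-n, subset_interior_iff_mem_nhdsSet.1 hn⟩

lemma eventually_forall_prodMk_mem_of_mem_nhdsSet {α β ι : Type*} [PseudoMetricSpace α]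
    [PseudoMetricSpace β] {l : Filter ι} {A : ι → Set α} {A₀ : Set α} (hA₀ : IsCompact A₀)
    (hA : ∀ ε : ℝ, 0 < ε → ∀ᶠ i in l, A i ⊆ thickening ε A₀) {h : ι → β} {h₀ : β}
    (hh : Tendsto h l (𝓝 h₀)) {t : Set (α × β)} (ht : t ∈ 𝓝ˢ (A₀ ×ˢ {h₀})) :
    ∀ᶠ i in l, ∀ w ∈ A i, (w, h i) ∈ t := by
  obtain ⟨δ, hδ, hδt⟩ := ((hasBasis_nhdsSet_thickening (hA₀.prod isCompact_singleton)).mem_iff).1 ht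
  filter_upwards [hA δ hδ, hh (ball_mem_nhds h₀ hδ)] with i hAi hhi w hw
  obtain ⟨a, ha, hwa⟩ := mem_thickening_iff.1 (hAi hw)
  exact hδt (mem_thickening_iff.2
    ⟨(a, h₀), ⟨ha, rfl⟩, by rw [Prod.dist_eq]; exact max_lt hwa hhi⟩)

section Clarke

variable {f : X → ℝ} {K : ℝ≥0} {U : Set X} {z : X}

noncomputable def clarkeQuotient (f : X → ℝ) (h : X) (p : X × ℝ) : ℝ :=
  (f (p.1 + p.2 • h) - f p.1) / p.2

lemma eventually_abs_clarkeQuotient_sub_le (hU : U ∈ 𝓝 z) (hf : LipschitzOnWith K f U)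
    (h h' : X) : ∀ᶠ p in 𝓝 z ×ˢ 𝓝[>] 0,
      |clarkeQuotient f h p - clarkeQuotient f h' p| ≤ K * ‖h - h'‖ := by
  have hmem : ∀ v : X, ∀ᶠ p in 𝓝 z ×ˢ 𝓝[>] (0 : ℝ), p.1 + p.2 • v ∈ U := by
    intro v
    have hcont : Tendsto (fun p : X × ℝ => p.1 + p.2 • v) (𝓝 (z, 0)) (𝓝 z) :=
      (continuous_fst.add (continuous_snd.smul continuous_const)).tendsto' _ _ (by simp)
    rw [nhds_prod_eq] at hcont
    exact hcont.mono_left (prod_mono le_rfl nhdsWithin_le_nhds) hU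
  filter_upwards [hmem h, hmem h', prod_mem_prod univ_mem self_mem_nhdsWithin]
    with p hph hph' hp
  have ht : 0 < p.2 := hp.2
  have hdist : dist (p.1 + p.2 • h) (p.1 + p.2 • h') = p.2 * ‖h - h'‖ := by
    rw [dist_add_left, dist_eq_norm, ← smul_sub, norm_smul, Real.norm_of_nonneg ht.le]
  have hlip := hf.dist_le_mul _ hph _ hph'
  rw [Real.dist_eq, hdist] at hlip
  rw [clarkeQuotient, clarkeQuotient, div_sub_div_same, sub_sub_sub_cancel_right, abs_div,
    abs_of_pos ht, div_le_iff₀ ht]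
  linarith

lemma eventually_abs_clarkeQuotient_le (hU : U ∈ 𝓝 z) (hf : LipschitzOnWith K f U) (h : X) :
    ∀ᶠ p in 𝓝 z ×ˢ 𝓝[>] 0, |clarkeQuotient f h p| ≤ K * ‖h‖ := by
  simpa [clarkeQuotient] using eventually_abs_clarkeQuotient_sub_le hU hf h 0

lemma isBoundedUnder_le_clarkeQuotient (hU : U ∈ 𝓝 z) (hf : LipschitzOnWith K f U) (h : X) :
    IsBoundedUnder (· ≤ ·) (𝓝 z ×ˢ 𝓝[>] 0) (clarkeQuotient f h) :=
  isBoundedUnder_of_eventually_le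
    ((eventually_abs_clarkeQuotient_le hU hf h).mono fun _ hp => (le_abs_self _).trans hp)

lemma isCoboundedUnder_le_clarkeQuotient (hU : U ∈ 𝓝 z) (hf : LipschitzOnWith K f U) (h : X) :
    IsCoboundedUnder (· ≤ ·) (𝓝 z ×ˢ 𝓝[>] 0) (clarkeQuotient f h) :=
  isCoboundedUnder_le_of_eventually_le _
    ((eventually_abs_clarkeQuotient_le hU hf h).mono fun _ hp => (abs_le.1 hp).1)

lemma neg_mul_norm_le_clarkeDeriv (hU : U ∈ 𝓝 z) (hf : LipschitzOnWith K f U) (h : X) :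
    -(K * ‖h‖) ≤ clarkeDeriv f z h :=
  le_limsup_of_frequently_le
    ((eventually_abs_clarkeQuotient_le hU hf h).mono fun _ hp => (abs_le.1 hp).1).frequently
    (isBoundedUnder_le_clarkeQuotient hU hf h)

lemma clarkeDeriv_le_of_eventually_le (hU : U ∈ 𝓝 z) (hf : LipschitzOnWith K f U) {h : X}
    {c : ℝ} (hc : ∀ᶠ p in 𝓝 z ×ˢ 𝓝[>] 0, clarkeQuotient f h p ≤ c) (h' : X) :
    clarkeDeriv f z h' ≤ c + K * ‖h' - h‖ := by
  refine limsup_le_of_le (isCoboundedUnder_le_clarkeQuotient hU hf h') ?_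
  filter_upwards [hc, eventually_abs_clarkeQuotient_sub_le hU hf h' h] with p hp hp'
  show clarkeQuotient f h' p ≤ _
  linarith [le_abs_self (clarkeQuotient f h' p - clarkeQuotient f h p)]

lemma upperSemicontinuous_clarkeDeriv (hf : LocallyLipschitz f) :
    UpperSemicontinuous fun p : X × X => clarkeDeriv f p.1 p.2 := by
  rintro ⟨x, h₀⟩ c (hc : clarkeDeriv f x h₀ < c)
  obtain ⟨K, U, hU, hfU⟩ := hf x
  obtain ⟨c', hxc', hc'c⟩ := exists_between hc
  have hq : ∀ᶠ z in 𝓝 x, ∀ᶠ p in 𝓝 z ×ˢ 𝓝[>] 0, clarkeQuotient f h₀ p < c' :=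
    eventually_eventually_nhds_prod
      (eventually_lt_of_limsup_lt hxc' (isBoundedUnder_le_clarkeQuotient hU hfU h₀))
  have hdir : ∀ᶠ h' in 𝓝 h₀, K * ‖h' - h₀‖ < c - c' := by
    have hcont : Tendsto (fun h' => K * ‖h' - h₀‖) (𝓝 h₀) (𝓝 0) :=
      (continuous_const.mul (continuous_id.sub continuous_const).norm).tendsto' _ _ (by simp)
    exact hcont.eventually_lt_const (sub_pos.2 hc'c)
  rw [nhds_prod_eq]
  filter_upwards [(hq.and (eventually_mem_nhds_iff.2 hU)).prod_mk hdir]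
    with ⟨z, h'⟩ ⟨⟨hqz, hUz⟩, hh'⟩
  have := clarkeDeriv_le_of_eventually_le hUz hfU (hqz.mono fun _ hp => hp.le) h'
  exact this.trans_lt (by linarith)

lemma exists_eventually_le_clarkeDeriv (hf : LocallyLipschitz f) (p : X × X) :
    ∃ C, ∀ᶠ q in 𝓝 p, C ≤ clarkeDeriv f q.1 q.2 := by
  obtain ⟨K, U, hU, hfU⟩ := hf p.1
  refine ⟨-(K * (‖p.2‖ + 1)), ?_⟩
  have hnorm : ∀ᶠ h' in 𝓝 p.2, ‖h'‖ < ‖p.2‖ + 1 :=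
    Tendsto.eventually_lt_const (lt_add_one _) continuous_norm.continuousAt
  rw [← Prod.mk.eta (p := p), nhds_prod_eq]
  filter_upwards [(eventually_mem_nhds_iff.2 hU).prod_mk hnorm] with ⟨z, h'⟩ ⟨hUz, hh'⟩
  have := neg_mul_norm_le_clarkeDeriv hUz hfU h'
  nlinarith [K.coe_nonneg]

lemma setDeriv_mem_Icc {A : Set X} (hA : A.Nonempty) {h : X} {a b : ℝ}
    (hab : ∀ y ∈ A, clarkeDeriv f y h ∈ Icc a b) : setDeriv f A h ∈ Icc a b := by
  obtain ⟨y, hy⟩ := hA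
  have hbdd : BddAbove ((fun y => clarkeDeriv f y h) '' A) :=
    ⟨b, forall_mem_image.2 fun y hy => (hab y hy).2⟩
  exact ⟨(hab y hy).1.trans (le_csSup hbdd (mem_image_of_mem _ hy)),
    csSup_le ⟨_, mem_image_of_mem _ hy⟩ (forall_mem_image.2 fun y hy => (hab y hy).2)⟩

end Clarke

theorem limsup_setDeriv_le_of_hausdorff_tendsto_general
    (f : X → ℝ) (hf : LocallyLipschitz f)
    (h : ℕ → X) (h₀ : X) (hh : Tendsto h atTop (nhds h₀))
    (A : ℕ → Set X) (A₀ : Set X) (hne : ∀ k, (A k).Nonempty)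
    (hcomp : IsCompact A₀)
    (hconv : ∀ ε : ℝ, 0 < ε → ∀ᶠ k in atTop,
      A₀ ⊆ Metric.thickening ε (A k) ∧ A k ⊆ Metric.thickening ε A₀) :
    Filter.limsup (fun k => setDeriv f (A k) (h k)) atTop ≤ setDeriv f A₀ h₀ := by
  set g : X × X → ℝ := fun p => clarkeDeriv f p.1 p.2
  have hK : IsCompact (A₀ ×ˢ {h₀}) := hcomp.prod isCompact_singleton
  have hunif : ∀ t ∈ 𝓝ˢ (A₀ ×ˢ {h₀}), ∀ᶠ k in atTop, ∀ w ∈ A k, (w, h k) ∈ t :=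
    fun t => eventually_forall_prodMk_mem_of_mem_nhdsSet hcomp
      (fun ε hε => (hconv ε hε).mono fun _ hk => hk.2) hh
  have hg := upperSemicontinuous_clarkeDeriv hf
  have hM : ∀ p ∈ A₀ ×ˢ {h₀}, g p ≤ setDeriv f A₀ h₀ := by
    rintro ⟨a, _⟩ ⟨ha, rfl⟩
    exact le_csSup ((hg.comp (continuous_id.prodMk continuous_const)).upperSemicontinuousOn
      A₀ |>.bddAbove_of_isCompact hcomp) (mem_image_of_mem _ ha)
  obtain ⟨C, hC⟩ :=
    hK.exists_eventually_nhdsSet_le fun p _ => exists_eventually_le_clarkeDeriv hf p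
  have hbound : ∀ ε > 0, ∀ᶠ k in atTop,
      setDeriv f (A k) (h k) ∈ Icc C (setDeriv f A₀ h₀ + ε) := by
    intro ε hε
    have hlt : {p | g p < setDeriv f A₀ h₀ + ε} ∈ 𝓝ˢ (A₀ ×ˢ {h₀}) :=
      (hg.isOpen_preimage _).mem_nhdsSet.2 fun p hp =>
        (hM p hp).trans_lt (lt_add_of_pos_right _ hε)
    filter_upwards [hunif _ (hC.and hlt)] with k hk
    exact setDeriv_mem_Icc (hne k) fun w hw => ⟨(hk w hw).1, (hk w hw).2.le⟩
  refine le_of_forall_pos_le_add fun ε hε => limsup_le_of_le ?_ ?_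
  -- the lower bound matters: `limsup` of a sequence unbounded below is the junk value `0`
  · exact isCoboundedUnder_le_of_eventually_le _ ((hbound 1 one_pos).mono fun _ hk => hk.1)
  · exact (hbound ε hε).mono fun _ hk => hk.2

/-- Proposition 2.2 (upper semicontinuity), inequality (5):
`limsup_k f⁰(A_k;h_k) ≤ f⁰(A;h)`. -/
theorem limsup_setDeriv_le_of_hausdorff_tendsto
    [CompleteSpace X] (f : X → ℝ) (hf : LocallyLipschitz f)
    (h : ℕ → X) (h₀ : X) (hh : Tendsto h atTop (nhds h₀))
    (A : ℕ → Set X) (A₀ : Set X) (hne : ∀ k, (A k).Nonempty) (hA₀ : A₀.Nonempty)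
    (hcomp : IsCompact A₀)
    (hconv : ∀ ε : ℝ, 0 < ε → ∀ᶠ k in atTop,
      A₀ ⊆ Metric.thickening ε (A k) ∧ A k ⊆ Metric.thickening ε A₀) :
    Filter.limsup (fun k => setDeriv f (A k) (h k)) atTop ≤ setDeriv f A₀ h₀ :=
  limsup_setDeriv_le_of_hausdorff_tendsto_general f hf h h₀ hh A A₀ hne hcomp hconv
end

section
/- Let f : X → ℝ be locally Lipschitz continuous, let x ∈ X, let ε_k → 0 with ε_k > 0, and let A_k ⊂ X satisfy x ∈ A_k ⊂ B_{ε_k}(x) for all k. Then for every h ∈ X, lim_{k→∞} f⁰(A_k;h) = f⁰(x;h), and ⋂_{k∈ℕ} ∂f(A_k) = ∂f(x). -/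
open Filter Metric Set NormedSpace
open scoped NNReal

variable {X : Type*} [NormedAddCommGroup X] [NormedSpace ℝ X]

lemma clarke_quot_bound (f : X → ℝ) (h : X) {K : ℝ≥0} {s : Set X}
    (hs : LipschitzOnWith K f s) {x : X} {δ : ℝ} (hδ : 0 < δ) (hball : ball x δ ⊆ s)
    {y : X} (hy : y ∈ ball x (δ / 2)) :
    ∀ᶠ p in ((nhds y) ×ˢ (nhdsWithin (0 : ℝ) (Ioi 0))),
      |(f (p.1 + p.2 • h) - f p.1) / p.2| ≤ (K : ℝ) * ‖h‖ := by
  have hyx : dist y x < δ / 2 := mem_ball.mp hy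
  set c : ℝ := δ - dist y x with hc
  have hdist : (0:ℝ) ≤ dist y x := dist_nonneg
  have hc0 : 0 < c := by simp only [hc]; linarith
  have h1 : ball y (c / 2) ∈ nhds y := ball_mem_nhds _ (by positivity)
  have h2 : Ioo (0 : ℝ) (c / 2 / (‖h‖ + 1)) ∈ nhdsWithin (0:ℝ) (Ioi 0) :=
    Ioo_mem_nhdsGT_of_mem ⟨le_refl _, by positivity⟩
  filter_upwards [prod_mem_prod h1 h2] with p hp
  obtain ⟨hp1, hp2⟩ := hp
  have ht0 : 0 < p.2 := hp2.1
  have hth : p.2 * ‖h‖ < c / 2 := by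
    have h3 : p.2 * (‖h‖ + 1) < c / 2 :=
      (lt_div_iff₀ (by positivity)).mp hp2.2
    nlinarith [ht0]
  have hmem1 : p.1 ∈ ball x δ := by
    have := mem_ball.mp hp1
    have := dist_triangle p.1 y x
    simp only [mem_ball]
    simp only [hc] at *
    linarith
  have hnorm : ‖p.2 • h‖ = p.2 * ‖h‖ := by
    rw [norm_smul, Real.norm_of_nonneg ht0.le]
  have hmem2 : p.1 + p.2 • h ∈ ball x δ := by
    have hd : dist (p.1 + p.2 • h) p.1 = ‖p.2 • h‖ := by
      rw [dist_eq_norm, add_sub_cancel_left]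
    have := dist_triangle (p.1 + p.2 • h) p.1 x
    have h4 := mem_ball.mp hmem1
    have h5 := mem_ball.mp hp1
    have := dist_triangle p.1 y x
    simp only [mem_ball]
    rw [hd, hnorm] at *
    simp only [hc] at *
    linarith
  have hlip : |f (p.1 + p.2 • h) - f p.1| ≤ (K : ℝ) * (p.2 * ‖h‖) := by
    have := hs.dist_le_mul _ (hball hmem2) _ (hball hmem1)
    rw [Real.dist_eq] at this
    rw [dist_eq_norm, add_sub_cancel_left, hnorm] at this
    exact this
  rw [abs_div, abs_of_pos ht0, div_le_iff₀ ht0]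
  calc |f (p.1 + p.2 • h) - f p.1| ≤ (K : ℝ) * (p.2 * ‖h‖) := hlip
    _ = (K : ℝ) * ‖h‖ * p.2 := by ring

lemma clarke_abs_le (f : X → ℝ) (h : X) {K : ℝ≥0} {s : Set X}
    (hs : LipschitzOnWith K f s) {x : X} {δ : ℝ} (hδ : 0 < δ) (hball : ball x δ ⊆ s)
    {y : X} (hy : y ∈ ball x (δ / 2)) :
    |clarkeDeriv f y h| ≤ (K : ℝ) * ‖h‖ := by
  have hb := clarke_quot_bound f h hs hδ hball hy
  have hub : ∀ᶠ p in ((nhds y) ×ˢ (nhdsWithin (0 : ℝ) (Ioi 0))),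
      (f (p.1 + p.2 • h) - f p.1) / p.2 ≤ (K : ℝ) * ‖h‖ :=
    hb.mono fun p hp => (abs_le.mp hp).2
  have hlb : ∀ᶠ p in ((nhds y) ×ˢ (nhdsWithin (0 : ℝ) (Ioi 0))),
      -((K : ℝ) * ‖h‖) ≤ (f (p.1 + p.2 • h) - f p.1) / p.2 :=
    hb.mono fun p hp => (abs_le.mp hp).1
  rw [abs_le]
  constructor
  · exact le_limsup_of_frequently_le hlb.frequently ⟨(K : ℝ) * ‖h‖, eventually_map.2 hub⟩
  · exact limsup_le_of_le (isCoboundedUnder_le_of_eventually_le _ hlb) hub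

lemma clarke_usc (f : X → ℝ) (h : X) {K : ℝ≥0} {s : Set X}
    (hs : LipschitzOnWith K f s) {x : X} {δ : ℝ} (hδ : 0 < δ) (hball : ball x δ ⊆ s)
    {ε : ℝ} (hε : 0 < ε) :
    ∃ δ' > 0, δ' ≤ δ / 2 ∧
      ∀ y ∈ ball x δ', clarkeDeriv f y h ≤ clarkeDeriv f x h + ε := by
  have hxmem : x ∈ ball x (δ / 2) := mem_ball_self (by positivity)
  have hbx := clarke_quot_bound f h hs hδ hball hxmem
  have hbdd : IsBoundedUnder (· ≤ ·) ((nhds x) ×ˢ (nhdsWithin (0 : ℝ) (Ioi 0)))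
      (fun p : X × ℝ => (f (p.1 + p.2 • h) - f p.1) / p.2) :=
    ⟨(K : ℝ) * ‖h‖, eventually_map.2 (hbx.mono fun p hp => (abs_le.mp hp).2)⟩
  have hlt : clarkeDeriv f x h < clarkeDeriv f x h + ε := by linarith
  have hev : ∀ᶠ p in ((nhds x) ×ˢ (nhdsWithin (0 : ℝ) (Ioi 0))),
      (f (p.1 + p.2 • h) - f p.1) / p.2 < clarkeDeriv f x h + ε :=
    eventually_lt_of_limsup_lt hlt hbdd
  rw [eventually_iff] at hev
  obtain ⟨U, hU, V, hV, hUV⟩ := mem_prod_iff.mp hev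
  obtain ⟨r, hr0, hrU⟩ := Metric.mem_nhds_iff.mp hU
  refine ⟨min (r / 2) (δ / 2), by positivity, min_le_right _ _, fun y hy => ?_⟩
  have hy2 : y ∈ ball x (δ / 2) :=
    mem_of_mem_of_subset hy (ball_subset_ball (min_le_right _ _))
  have hyr : y ∈ ball x (r / 2) :=
    mem_of_mem_of_subset hy (ball_subset_ball (min_le_left _ _))
  have hby := clarke_quot_bound f h hs hδ hball hy2
  have hsub : ball y (r / 2) ⊆ U := by
    refine subset_trans ?_ hrU
    intro z hz
    have := mem_ball.mp hz
    have := mem_ball.mp hyr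
    have := dist_triangle z y x
    simp only [mem_ball]
    linarith
  have hevy : ∀ᶠ p in ((nhds y) ×ˢ (nhdsWithin (0 : ℝ) (Ioi 0))),
      (f (p.1 + p.2 • h) - f p.1) / p.2 < clarkeDeriv f x h + ε := by
    filter_upwards [prod_mem_prod (ball_mem_nhds y (by positivity : (0:ℝ) < r / 2)) hV]
      with p hp
    exact hUV (Set.mk_mem_prod (hsub hp.1) hp.2)
  exact limsup_le_of_le
    (isCoboundedUnder_le_of_eventually_le _ (hby.mono fun p hp => (abs_le.mp hp).1))
    (hevy.mono fun p hp => hp.le)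

/-- Corollary 2.3: for `x ∈ A_k ⊆ B_{ε_k}(x)` with `ε_k → 0`,
`f⁰(A_k;h) → f⁰(x;h)` and `⋂_k ∂f(A_k) = ∂f(x)`. -/
theorem setDeriv_tendsto_clarkeDeriv_and_iInter_setGrad
    [CompleteSpace X] (f : X → ℝ) (hf : LocallyLipschitz f) (x : X)
    (ε : ℕ → ℝ) (hε : ∀ k, 0 < ε k) (hε0 : Tendsto ε atTop (nhds 0))
    (A : ℕ → Set X) (hxA : ∀ k, x ∈ A k) (hAε : ∀ k, A k ⊆ Metric.ball x (ε k)) :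
    (∀ h : X, Tendsto (fun k => setDeriv f (A k) h) atTop (nhds (clarkeDeriv f x h))) ∧
    (⋂ k : ℕ, setGrad f (A k)) = clarkeGrad f x := by
  obtain ⟨K, t, ht, hlip⟩ := hf x
  obtain ⟨δ, hδ0, hball⟩ := Metric.mem_nhds_iff.mp ht
  -- boundedness of image sets for small A k
  have hbddA : ∀ h : X, ∀ k, A k ⊆ ball x (δ / 2) →
      BddAbove ((fun y => clarkeDeriv f y h) '' A k) := by
    intro h k hsub
    refine ⟨(K : ℝ) * ‖h‖, ?_⟩
    rintro _ ⟨y, hy, rfl⟩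
    exact (abs_le.mp (clarke_abs_le f h hlip hδ0 hball (hsub hy))).2
  -- Part 1
  have part1 : ∀ h : X,
      Tendsto (fun k => setDeriv f (A k) h) atTop (nhds (clarkeDeriv f x h)) := by
    intro h
    rw [Metric.tendsto_atTop]
    intro η hη
    obtain ⟨δ', hδ'0, hδ'le, husc⟩ := clarke_usc f h hlip hδ0 hball (half_pos hη)
    have hev : ∀ᶠ k in atTop, ε k < δ' := hε0.eventually_lt_const hδ'0
    rw [eventually_atTop] at hev
    obtain ⟨N, hN⟩ := hev
    refine ⟨N, fun k hk => ?_⟩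
    have hsub : A k ⊆ ball x δ' :=
      (hAε k).trans (ball_subset_ball (hN k hk).le)
    have hsub2 : A k ⊆ ball x (δ / 2) := hsub.trans (ball_subset_ball hδ'le)
    have hbdd := hbddA h k hsub2
    have hlow : clarkeDeriv f x h ≤ setDeriv f (A k) h :=
      le_csSup hbdd ⟨x, hxA k, rfl⟩
    have hup : setDeriv f (A k) h ≤ clarkeDeriv f x h + η / 2 := by
      refine csSup_le (⟨_, ⟨x, hxA k, rfl⟩⟩) ?_
      rintro _ ⟨y, hy, rfl⟩
      exact husc y (hsub hy)
    rw [Real.dist_eq, abs_of_nonneg (by linarith)]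
    linarith
  refine ⟨part1, ?_⟩
  ext a
  constructor
  · intro ha
    intro h
    have hev : ∀ᶠ k in atTop, a h ≤ setDeriv f (A k) h := by
      have hev' : ∀ᶠ k in atTop, ε k < δ / 2 :=
        hε0.eventually_lt_const (by positivity)
      filter_upwards [hev'] with k hk
      have hak : a ∈ setGrad f (A k) := Set.mem_iInter.mp ha k
      have hsub2 : A k ⊆ ball x (δ / 2) :=
        (hAε k).trans (ball_subset_ball hk.le)
      have hbdd := hbddA h k hsub2
      set Sk := setDeriv f (A k) h with hSk
      have hconv : convexHull ℝ (⋃ y ∈ A k, clarkeGrad f y) ⊆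
          {b : StrongDual ℝ X | b h ≤ Sk} := by
        apply convexHull_min
        · rintro b hb
          simp only [mem_iUnion, exists_prop] at hb
          obtain ⟨y, hy, hby⟩ := hb
          exact (hby h).trans (le_csSup hbdd ⟨y, hy, rfl⟩)
        · exact convex_halfSpace_le
            ⟨fun a b => by simp, fun c a => by simp⟩ Sk
      have hC : IsClosed {b : WeakDual ℝ X | b h ≤ Sk} :=
        isClosed_le (WeakDual.eval_continuous h) continuous_const
      have hmem : StrongDual.toWeakDual a ∈ {b : WeakDual ℝ X | b h ≤ Sk} := by
        refine closure_minimal ?_ hC hak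
        rintro _ ⟨b, hb, rfl⟩
        exact hconv hb
      exact hmem
    exact ge_of_tendsto (part1 h) hev
  · intro ha
    refine Set.mem_iInter.mpr fun k => ?_
    show StrongDual.toWeakDual a ∈ _
    apply subset_closure
    exact ⟨a, subset_convexHull _ _ (mem_iUnion₂.mpr ⟨x, hxA k, ha⟩), rfl⟩
end

section
/- Let f : ℝⁿ → ℝ be locally Lipschitz continuous. Then for all x ∈ ℝⁿ and ε ≥ 0, Goldstein's ε-generalized gradient δ_ε f(x) equals ∂f(B̄_ε(x)), the gradient of f on the closed ball B̄_ε(x). -/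
open Filter Metric Set NormedSpace
open scoped NNReal

variable {X : Type*} [NormedAddCommGroup X] [NormedSpace ℝ X]

/-- Gradient of `f` on a set `A ⊆ ℝⁿ`: the closed convex hull of `⋃_{y∈A} ∂f(y)`
(in finite dimensions the norm closure agrees with the weak* closure). -/
noncomputable def setGradCl (f : X → ℝ) (A : Set X) : Set (StrongDual ℝ X) :=
  closure (convexHull ℝ (⋃ y ∈ A, clarkeGrad f y))

/-- Goldstein's ε-generalized gradient
`δ_ε f(x) := conv ⋂_{k=1}^∞ closure {f'(y) : y ∈ B̄_{ε+1/k}(x), f'(y) exists}`. -/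
noncomputable def goldsteinGrad (f : X → ℝ) (ε : ℝ) (x : X) : Set (StrongDual ℝ X) :=
  convexHull ℝ (⋂ k : ℕ,
    closure {a : StrongDual ℝ X | ∃ y ∈ Metric.closedBall x (ε + 1 / (k + 1)), HasFDerivAt f a y})


section Auxiliary

open MeasureTheory intervalIntegral
open scoped ENNReal Topology

/-- If a Lipschitz function `φ : ℝ → ℝ` has a.e. derivative `≤ c` on `(0,t)`,
then `φ t - φ 0 ≤ c * t`. -/
lemma aux_oneDim (φ : ℝ → ℝ) (M : ℝ≥0) (hφ : LipschitzWith M φ) {t c : ℝ} (ht : 0 < t)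
    (H : ∀ᵐ s : ℝ, s ∈ Ioo 0 t → ∃ d, d ≤ c ∧ HasDerivAt φ d s) :
    φ t - φ 0 ≤ c * t := by
  have hLip_bound : ∀ u v : ℝ, |φ u - φ v| ≤ M * |u - v| := by
    intro u v
    have := hφ.dist_le_mul u v
    rwa [Real.dist_eq, Real.dist_eq] at this
  have hLt : φ t - φ 0 ≤ M * t := by
    have := hLip_bound t 0
    rw [sub_zero, abs_of_pos ht] at this
    exact (le_abs_self _).trans this
  rcases le_or_gt (M : ℝ) c with hMc | hMc
  · exact hLt.trans (by nlinarith)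
  -- now c < M
  set δ : ℕ → ℝ := fun j => 1 / (j + 1) with hδ
  have hδpos : ∀ j, 0 < δ j := fun j => by positivity
  have hδ0 : Tendsto δ atTop (𝓝 0) := tendsto_one_div_add_atTop_nhds_zero_nat
  have hslope : ∀ (F : ℝ → ℝ) (u d : ℝ), HasDerivAt F d u →
      Tendsto (fun j => (F (u + δ j) - F u) / δ j) atTop (𝓝 d) := by
    intro F u d hd
    have h1 : Tendsto (fun j => u + δ j) atTop (𝓝[≠] u) := by
      rw [tendsto_nhdsWithin_iff]
      refine ⟨by simpa using (tendsto_const_nhds.add hδ0), Eventually.of_forall fun j => ?_⟩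
      simp only [mem_compl_iff, mem_singleton_iff]
      have := hδpos j; intro hc; nlinarith [hδpos j]
    have h2 := (hasDerivAt_iff_tendsto_slope.1 hd).comp h1
    have h3 : (fun j => slope F u (u + δ j)) = fun j => (F (u + δ j) - F u) / δ j := by
      funext j
      rw [slope_def_field]
      rw [add_sub_cancel_left]
    simp only [Function.comp_def] at h2
    rwa [h3] at h2
  set q : ℕ → ℝ → ℝ := fun j s => (φ (s + δ j) - φ s) / δ j with hq
  have hqc : ∀ j, Continuous (q j) := by
    intro j
    exact ((hφ.continuous.comp (continuous_id.add continuous_const)).sub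
      hφ.continuous).div_const _
  have hqbound : ∀ j s, |q j s| ≤ M := by
    intro j s
    rw [hq, abs_div, abs_of_pos (hδpos j)]
    rw [div_le_iff₀ (hδpos j)]
    have := hLip_bound (s + δ j) s
    simpa [abs_of_pos (hδpos j)] using this
  -- the integrals converge to φ t - φ 0
  set ψ : ℝ → ℝ := fun u => ∫ s in (0:ℝ)..u, φ s with hψdef
  have hψ : ∀ u : ℝ, HasDerivAt ψ (φ u) u := fun u =>
    (hφ.continuous.integral_hasStrictDerivAt 0 u).hasDerivAt
  set I : ℕ → ℝ := fun j => ∫ s in (0:ℝ)..t, q j s with hI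
  have hIeq : ∀ j, I j = ((ψ (t + δ j) - ψ t) - (ψ (0 + δ j) - ψ 0)) / δ j := by
    intro j
    have int1 : IntervalIntegrable (fun s => φ (s + δ j)) volume 0 t :=
      (hφ.continuous.comp (continuous_id.add continuous_const)).intervalIntegrable _ _
    have int2 : IntervalIntegrable φ volume 0 t := hφ.continuous.intervalIntegrable _ _
    have e0 : I j = (∫ s in (0:ℝ)..t, (φ (s + δ j) - φ s)) / δ j := by
      rw [hI]
      simp only [hq]
      rw [intervalIntegral.integral_div]
    rw [e0, intervalIntegral.integral_sub int1 int2,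
      intervalIntegral.integral_comp_add_right (fun s => φ s) (δ j)]
    have e1 : ∫ s in (0 + δ j)..(t + δ j), φ s = ψ (t + δ j) - ψ (0 + δ j) := by
      have h1 : IntervalIntegrable φ volume 0 (0 + δ j) :=
        hφ.continuous.intervalIntegrable _ _
      have h2 : IntervalIntegrable φ volume (0 + δ j) (t + δ j) :=
        hφ.continuous.intervalIntegrable _ _
      have h3 := intervalIntegral.integral_add_adjacent_intervals h1 h2
      rw [hψdef]
      simp only []
      rw [← h3]
      simp
    rw [e1, show (∫ s in (0:ℝ)..t, φ s) = ψ t from rfl,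
      show ψ 0 = 0 by simp [hψdef]]
    ring
  have hIlim : Tendsto I atTop (𝓝 (φ t - φ 0)) := by
    have hA := hslope ψ t (φ t) (hψ t)
    have hB := hslope ψ 0 (φ 0) (hψ 0)
    apply (hA.sub hB).congr
    intro j
    rw [hIeq j]
    ring
  -- Fatou
  set μ : Measure ℝ := volume.restrict (Ioo 0 t) with hμ
  set g : ℕ → ℝ → ℝ≥0∞ := fun j s => ENNReal.ofReal ((M : ℝ) - q j s) with hg
  have hgmeas : ∀ j, Measurable (g j) := fun j =>
    ((continuous_const.sub (hqc j)).measurable).ennreal_ofReal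
  have fatou := MeasureTheory.lintegral_liminf_le (μ := μ) (u := atTop) hgmeas
  have hIoofin : volume (Ioo (0:ℝ) t) < ⊤ := measure_Ioo_lt_top
  -- lower bound for ∫⁻ liminf
  have hlow : ENNReal.ofReal ((M : ℝ) - c) * ENNReal.ofReal t ≤
      ∫⁻ s, liminf (fun j => g j s) atTop ∂μ := by
    have hae : ∀ᵐ s ∂μ, ENNReal.ofReal ((M : ℝ) - c) ≤ liminf (fun j => g j s) atTop := by
      have h1 : ∀ᵐ s ∂μ, s ∈ Ioo 0 t := ae_restrict_mem measurableSet_Ioo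
      have h2 : ∀ᵐ s ∂μ, s ∈ Ioo 0 t → ∃ d, d ≤ c ∧ HasDerivAt φ d s :=
        ae_restrict_of_ae H
      filter_upwards [h1, h2] with s hs hder
      obtain ⟨d, hdc, hd⟩ := hder hs
      have hq_lim : Tendsto (fun j => q j s) atTop (𝓝 d) := hslope φ s d hd
      have hgl : Tendsto (fun j => g j s) atTop (𝓝 (ENNReal.ofReal ((M : ℝ) - d))) :=
        (ENNReal.continuous_ofReal.tendsto _).comp (tendsto_const_nhds.sub hq_lim)
      rw [hgl.liminf_eq]
      exact ENNReal.ofReal_le_ofReal (by linarith)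
    calc ENNReal.ofReal ((M : ℝ) - c) * ENNReal.ofReal t
        = ENNReal.ofReal ((M : ℝ) - c) * μ univ := by
          rw [hμ, Measure.restrict_apply_univ, Real.volume_Ioo, sub_zero]
      _ = ∫⁻ _, ENNReal.ofReal ((M : ℝ) - c) ∂μ := by rw [lintegral_const]
      _ ≤ _ := lintegral_mono_ae hae
  -- upper: compute ∫⁻ g j
  have hqInt : ∀ j, IntegrableOn (q j) (Ioo 0 t) volume := fun j =>
    ((hqc j).continuousOn.integrableOn_compact isCompact_Icc).mono_set Ioo_subset_Icc_self
  have hcInt : IntegrableOn (fun _ : ℝ => (M : ℝ)) (Ioo 0 t) volume :=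
    integrableOn_const hIoofin.ne
  have hIeqIoo : ∀ j, I j = ∫ s in Ioo (0:ℝ) t, q j s := by
    intro j
    rw [hI]
    simp only []
    rw [intervalIntegral.integral_of_le ht.le, MeasureTheory.integral_Ioc_eq_integral_Ioo]
  have hup : ∀ j, ∫⁻ s, g j s ∂μ = ENNReal.ofReal ((M : ℝ) * t - I j) := by
    intro j
    rw [hμ, hg]
    have key := MeasureTheory.ofReal_integral_eq_lintegral_ofReal ((hcInt.sub (hqInt j)))
      (Eventually.of_forall fun s => by
        have hb := (abs_le.1 (hqbound j s)).2
        simp only [Pi.sub_apply, Pi.zero_apply]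
        linarith)
    simp only [Pi.sub_apply] at key
    rw [← key]
    congr 1
    rw [MeasureTheory.integral_sub hcInt (hqInt j), MeasureTheory.setIntegral_const,
      Real.volume_real_Ioo_of_le ht.le, sub_zero, hIeqIoo j, smul_eq_mul]
    ring
  -- conclusion
  have hRlim : Tendsto (fun j => ENNReal.ofReal ((M : ℝ) * t - I j)) atTop
      (𝓝 (ENNReal.ofReal ((M : ℝ) * t - (φ t - φ 0)))) :=
    (ENNReal.continuous_ofReal.tendsto _).comp (tendsto_const_nhds.sub hIlim)
  have final : ENNReal.ofReal (((M : ℝ) - c) * t) ≤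
      ENNReal.ofReal ((M : ℝ) * t - (φ t - φ 0)) := by
    calc ENNReal.ofReal (((M : ℝ) - c) * t)
        = ENNReal.ofReal ((M : ℝ) - c) * ENNReal.ofReal t :=
          ENNReal.ofReal_mul (by linarith)
      _ ≤ ∫⁻ s, liminf (fun j => g j s) atTop ∂μ := hlow
      _ ≤ liminf (fun j => ∫⁻ s, g j s ∂μ) atTop := fatou
      _ = liminf (fun j => ENNReal.ofReal ((M : ℝ) * t - I j)) atTop := by
          congr 1
          funext j
          exact hup j
      _ = ENNReal.ofReal ((M : ℝ) * t - (φ t - φ 0)) := hRlim.liminf_eq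
  rw [ENNReal.ofReal_le_ofReal_iff (by linarith)] at final
  nlinarith

lemma aux_sum_pad {α : Type*} {V : Type*} [AddCommMonoid V] (t : Finset α) (d : ℕ)
    (hcard : t.card ≤ d) (Φ : α → V) :
    ∑ i : Fin d, (if h : (i : ℕ) < t.card then Φ ((t.equivFin.symm ⟨i, h⟩ : α)) else 0)
      = ∑ y ∈ t, Φ y := by
  set F : ℕ → V := fun m => if h : m < t.card then Φ ((t.equivFin.symm ⟨m, h⟩ : α)) else 0 with hF
  have e1 : ∑ i : Fin d, F (i : ℕ) = ∑ m ∈ Finset.range d, F m :=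
    Fin.sum_univ_eq_sum_range F d
  have e2 : ∑ m ∈ Finset.range t.card, F m = ∑ m ∈ Finset.range d, F m := by
    apply Finset.sum_subset (Finset.range_subset_range.2 hcard)
    intro m _ hm
    rw [Finset.mem_range, not_lt] at hm
    rw [hF]
    exact dif_neg (by omega)
  have e3 : ∑ m ∈ Finset.range t.card, F m = ∑ i : Fin t.card, F (i : ℕ) :=
    (Fin.sum_univ_eq_sum_range F t.card).symm
  have e4 : ∑ i : Fin t.card, F (i : ℕ) = ∑ i : Fin t.card, Φ ((t.equivFin.symm i : α)) := by
    refine Finset.sum_congr rfl fun i _ => ?_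
    rw [hF]
    simp only []
    rw [dif_pos i.2]
  have e5 : ∑ i : Fin t.card, Φ ((t.equivFin.symm i : α)) = ∑ y : ↥t, Φ (y : α) :=
    Equiv.sum_comp t.equivFin.symm (fun y : ↥t => Φ (y : α))
  have e6 : ∑ y : ↥t, Φ (y : α) = ∑ y ∈ t, Φ y := Finset.sum_coe_sort t Φ
  calc ∑ i : Fin d, (if h : (i : ℕ) < t.card then Φ ((t.equivFin.symm ⟨i, h⟩ : α)) else 0)
      = ∑ i : Fin d, F (i : ℕ) := rfl
    _ = ∑ m ∈ Finset.range d, F m := e1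
    _ = ∑ m ∈ Finset.range t.card, F m := e2.symm
    _ = ∑ y ∈ t, Φ y := by rw [e3, e4, e5, e6]

/-- In a finite-dimensional normed space, the convex hull of a compact set is compact. -/
lemma aux_isCompact_convexHull {F : Type*} [NormedAddCommGroup F] [NormedSpace ℝ F]
    [FiniteDimensional ℝ F] {s : Set F} (hs : IsCompact s) :
    IsCompact (convexHull ℝ s) := by
  rcases Set.eq_empty_or_nonempty s with rfl | hne
  · simpa [convexHull_empty] using isCompact_empty
  set d : ℕ := Module.finrank ℝ F + 1 with hd
  set T : (Fin d → ℝ) × (Fin d → F) → F := fun p => ∑ i, p.1 i • p.2 i with hT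
  have hTc : Continuous T := by
    apply continuous_finset_sum
    intro i _
    exact ((continuous_apply i).comp continuous_fst).smul
      ((continuous_apply i).comp continuous_snd)
  have hKc : IsCompact ((stdSimplex ℝ (Fin d)) ×ˢ (Set.univ.pi fun _ : Fin d => s)) :=
    (isCompact_stdSimplex ℝ (Fin d)).prod (isCompact_univ_pi fun _ => hs)
  have himg : convexHull ℝ s =
      T '' ((stdSimplex ℝ (Fin d)) ×ˢ (Set.univ.pi fun _ : Fin d => s)) := by
    apply Subset.antisymm
    · intro x hx
      rw [convexHull_eq_union] at hx
      simp only [mem_iUnion] at hx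
      obtain ⟨t, hts, hai, hxt⟩ := hx
      have htne : t.Nonempty := by
        rcases t.eq_empty_or_nonempty with rfl | h
        · simp [convexHull_empty] at hxt
        · exact h
      obtain ⟨y₀, hy₀⟩ := htne
      have hcard : t.card ≤ d := by
        have h1 := hai.card_le_finrank_succ
        rw [Fintype.card_coe] at h1
        exact h1.trans (Nat.add_le_add_right (Submodule.finrank_le _) 1)
      obtain ⟨w, hw₀, hw₁, hwx⟩ := Finset.mem_convexHull'.1 hxt
      set g : Fin t.card ≃ ↥t := t.equivFin.symm with hg
      set zz : Fin d → F := fun i =>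
        if h : (i : ℕ) < t.card then (g ⟨i, h⟩ : F) else y₀ with hzz
      set ww : Fin d → ℝ := fun i =>
        if h : (i : ℕ) < t.card then w (g ⟨i, h⟩) else 0 with hww
      have h1 : ∑ i, ww i = 1 := by
        rw [hww, aux_sum_pad t d hcard w]
        exact hw₁
      have h2 : T (ww, zz) = x := by
        have hterm : ∀ i, ww i • zz i =
            if h : (i : ℕ) < t.card then (fun y => w y • y) ((g ⟨i, h⟩ : F)) else 0 := by
          intro i
          by_cases h : (i : ℕ) < t.card
          · rw [hww, hzz]
            simp only []
            rw [dif_pos h, dif_pos h, dif_pos h]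
          · rw [hww, hzz]
            simp only []
            rw [dif_neg h, dif_neg h, dif_neg h]
            exact zero_smul ℝ y₀
        have hsum : T (ww, zz) = ∑ i : Fin d,
            (if h : (i : ℕ) < t.card then (fun y => w y • y) ((g ⟨i, h⟩ : F)) else 0) :=
          Finset.sum_congr rfl fun i _ => hterm i
        rw [hsum, hg, aux_sum_pad t d hcard (fun y => w y • y)]
        exact hwx
      refine ⟨(ww, zz), ⟨⟨fun i => ?_, h1⟩, ?_⟩, h2⟩
      · rw [hww]
        simp only []
        by_cases h : (i : ℕ) < t.card
        · rw [dif_pos h]; exact hw₀ _ (g ⟨i, h⟩).2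
        · rw [dif_neg h]
      · rw [Set.mem_univ_pi]
        intro i
        rw [hzz]
        simp only []
        by_cases h : (i : ℕ) < t.card
        · rw [dif_pos h]; exact hts (g ⟨i, h⟩).2
        · rw [dif_neg h]; exact hts hy₀
    · rintro _ ⟨⟨w, z⟩, ⟨hw, hz⟩, rfl⟩
      exact mem_convexHull_of_exists_fintype w z hw.1 hw.2
        (fun i => (Set.mem_univ_pi.1 hz) i) rfl
  rw [himg]
  exact hKc.image hTc

variable {n : ℕ}


lemma aux_fubini (g : EuclideanSpace ℝ (Fin n) → ℝ) (K : ℝ≥0) (hg : LipschitzWith K g)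
    (h : EuclideanSpace ℝ (Fin n)) :
    ∀ᵐ w : EuclideanSpace ℝ (Fin n), ∀ᵐ s : ℝ, DifferentiableAt ℝ g (w + s • h) := by
  set N : Set (EuclideanSpace ℝ (Fin n)) := {z | ¬ DifferentiableAt ℝ g z} with hN
  have hNmeas : MeasurableSet N := (measurableSet_of_differentiableAt ℝ g).compl
  have hN0 : volume N = 0 := by
    have := hg.ae_differentiableAt (μ := volume)
    rwa [ae_iff] at this
  set A : Set (EuclideanSpace ℝ (Fin n) × ℝ) := (fun p :
      EuclideanSpace ℝ (Fin n) × ℝ => p.1 + p.2 • h) ⁻¹' N with hA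
  have hAmeas : MeasurableSet A := by
    apply (Continuous.measurable ?_) hNmeas
    exact continuous_fst.add (continuous_snd.smul continuous_const)
  have hA0 : (volume.prod volume) A = 0 := by
    rw [MeasureTheory.Measure.prod_apply_symm hAmeas]
    have hslice : ∀ s : ℝ, volume ((fun w : EuclideanSpace ℝ (Fin n) => (w, s)) ⁻¹' A) = 0 := by
      intro s
      have : ((fun w : EuclideanSpace ℝ (Fin n) => (w, s)) ⁻¹' A) =
          (fun w : EuclideanSpace ℝ (Fin n) => w + s • h) ⁻¹' N := rfl
      rw [this]
      have := measure_preimage_add_right (volume : Measure (EuclideanSpace ℝ (Fin n))) (s • h) N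
      rw [this, hN0]
    simp only [hslice, lintegral_zero]
  have := (MeasureTheory.Measure.measure_prod_null hAmeas).1 hA0
  filter_upwards [this] with w hw
  have : volume {s : ℝ | (w, s) ∈ A} = 0 := hw
  rw [ae_iff]
  exact this

/-- Key lemma: if all derivatives of `f` near `y` pair with `h` to at most `c`,
then the Clarke directional derivative is at most `c`. -/
lemma aux_lemA (f : EuclideanSpace ℝ (Fin n) → ℝ) (y h : EuclideanSpace ℝ (Fin n))
    (c r : ℝ) (K : ℝ≥0) (hr : 0 < r)
    (hlip : LipschitzOnWith K f (Metric.closedBall y r))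
    (hd : ∀ z ∈ Metric.ball y r, ∀ a : StrongDual ℝ (EuclideanSpace ℝ (Fin n)),
      HasFDerivAt f a z → a h ≤ c) :
    clarkeDeriv f y h ≤ c := by
  obtain ⟨g, hgK, hfg⟩ := hlip.extend_real
  have hgd : ∀ z ∈ Metric.ball y r, ∀ a : StrongDual ℝ (EuclideanSpace ℝ (Fin n)),
      HasFDerivAt g a z → a h ≤ c := by
    intro z hz a ha
    apply hd z hz a
    have hev : f =ᶠ[𝓝 z] g :=
      eventually_of_mem (isOpen_ball.mem_nhds hz) fun w hw => hfg (ball_subset_closedBall hw)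
    exact hev.hasFDerivAt_iff.2 ha
  -- the quantitative inequality for g
  have key : ∀ t : ℝ, 0 < t → t * ‖h‖ < r / 2 → ∀ y' ∈ Metric.ball y (r / 2),
      g (y' + t • h) - g y' ≤ c * t := by
    intro t ht hth
    have hgood := aux_fubini g K hgK h
    have hPdense : Dense {w : EuclideanSpace ℝ (Fin n) |
        ∀ᵐ s : ℝ, DifferentiableAt ℝ g (w + s • h)} :=
      MeasureTheory.Measure.dense_of_ae hgood
    set r' : ℝ := r - t * ‖h‖ with hr'
    have hr'pos : r / 2 < r' := by rw [hr']; linarith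
    have claim : ∀ w ∈ Metric.ball y r' ∩ {w : EuclideanSpace ℝ (Fin n) |
        ∀ᵐ s : ℝ, DifferentiableAt ℝ g (w + s • h)},
        g (w + t • h) - g w ≤ c * t := by
      rintro w ⟨hw, hwP⟩
      set φ : ℝ → ℝ := fun s => g (w + s • h) with hφ
      have hline : LipschitzWith ‖h‖₊ (fun s : ℝ => w + s • h) := by
        apply LipschitzWith.of_dist_le_mul
        intro a b
        rw [dist_eq_norm, dist_eq_norm]
        have : w + a • h - (w + b • h) = (a - b) • h := by module
        rw [this, norm_smul, Real.norm_eq_abs]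
        rw [coe_nnnorm]
        ring_nf
        exact le_rfl
      have hφlip : LipschitzWith (K * ‖h‖₊) φ := hgK.comp hline
      have hae : ∀ᵐ s : ℝ, s ∈ Ioo 0 t → ∃ d, d ≤ c ∧ HasDerivAt φ d s := by
        filter_upwards [hwP] with s hs hsIoo
        set z := w + s • h with hz
        have hzball : z ∈ Metric.ball y r := by
          rw [mem_ball, dist_eq_norm]
          have h1 : ‖w + s • h - y‖ ≤ ‖w - y‖ + ‖s • h‖ := by
            have : w + s • h - y = (w - y) + s • h := by module
            rw [this]; exact norm_add_le _ _
          have h2 : ‖s • h‖ ≤ t * ‖h‖ := by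
            rw [norm_smul, Real.norm_eq_abs, abs_of_pos hsIoo.1]
            have := hsIoo.2.le
            nlinarith [norm_nonneg h]
          have h3 : ‖w - y‖ < r' := by rwa [mem_ball, dist_eq_norm] at hw
          rw [hr'] at h3
          linarith
        have hlineDeriv : HasDerivAt (fun s : ℝ => w + s • h) h s := by
          simpa using ((hasDerivAt_id s).smul_const h).const_add w
        have hder : HasDerivAt φ ((fderiv ℝ g z) h) s :=
          (hs.hasFDerivAt.comp_hasDerivAt s hlineDeriv)
        exact ⟨(fderiv ℝ g z) h, hgd z hzball _ hs.hasFDerivAt, hder⟩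
      have := aux_oneDim φ (K * ‖h‖₊) hφlip ht hae
      simpa [hφ] using this
    -- extend by density and continuity
    intro y' hy'
    have hy'' : y' ∈ closure (Metric.ball y r' ∩ {w : EuclideanSpace ℝ (Fin n) |
        ∀ᵐ s : ℝ, DifferentiableAt ℝ g (w + s • h)}) := by
      apply hPdense.open_subset_closure_inter isOpen_ball
      exact Metric.ball_subset_ball hr'pos.le hy'
    have hclosed : IsClosed {w : EuclideanSpace ℝ (Fin n) | g (w + t • h) - g w ≤ c * t} := by
      apply isClosed_le
      · exact (hgK.continuous.comp (continuous_id.add continuous_const)).sub hgK.continuous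
      · exact continuous_const
    have := closure_minimal (fun w hw => claim w hw) hclosed hy''
    exact this
  -- now bound the limsup
  have hhpos : (0:ℝ) < ‖h‖ + 1 := by positivity
  set T : Set ℝ := Ioo 0 (r / (2 * (‖h‖ + 1))) with hT
  have hTmem : T ∈ 𝓝[>] (0:ℝ) := Ioo_mem_nhdsGT_of_mem ⟨le_rfl, by positivity⟩
  have hUmem : Metric.ball y (r / 2) ∈ 𝓝 y := ball_mem_nhds y (by positivity)
  have hth' : ∀ t ∈ T, t * ‖h‖ < r / 2 := by
    intro t htT
    obtain ⟨ht0, ht1⟩ := htT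
    calc t * ‖h‖ ≤ t * (‖h‖ + 1) := by nlinarith
      _ < (r / (2 * (‖h‖ + 1))) * (‖h‖ + 1) := by
          apply mul_lt_mul_of_pos_right ht1 hhpos
      _ = r / 2 := by field_simp
  have hub : ∀ᶠ p in ((𝓝 y) ×ˢ (𝓝[>] (0:ℝ))),
      (f (p.1 + p.2 • h) - f p.1) / p.2 ≤ c := by
    filter_upwards [prod_mem_prod hUmem hTmem] with p hp
    obtain ⟨hp1, hp2⟩ := hp
    have ht0 : (0:ℝ) < p.2 := hp2.1
    have hb1 : p.1 ∈ Metric.closedBall y r :=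
      Metric.closedBall_subset_closedBall (by linarith) (ball_subset_closedBall hp1)
    have hb2 : p.1 + p.2 • h ∈ Metric.closedBall y r := by
      rw [mem_closedBall, dist_eq_norm]
      have h1 : ‖p.1 + p.2 • h - y‖ ≤ ‖p.1 - y‖ + ‖p.2 • h‖ := by
        have : p.1 + p.2 • h - y = (p.1 - y) + p.2 • h := by module
        rw [this]; exact norm_add_le _ _
      have h2 : ‖p.2 • h‖ < r / 2 := by
        rw [norm_smul, Real.norm_eq_abs, abs_of_pos ht0]
        exact hth' p.2 hp2
      have h3 : ‖p.1 - y‖ < r / 2 := by rwa [mem_ball, dist_eq_norm] at hp1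
      linarith
    have := key p.2 ht0 (hth' p.2 hp2) p.1 hp1
    rw [hfg hb1, hfg hb2]
    rw [div_le_iff₀ ht0]
    linarith [this]
  have hlb : ∀ᶠ p in ((𝓝 y) ×ˢ (𝓝[>] (0:ℝ))),
      (-(K * ‖h‖) : ℝ) ≤ (f (p.1 + p.2 • h) - f p.1) / p.2 := by
    filter_upwards [prod_mem_prod hUmem hTmem] with p hp
    obtain ⟨hp1, hp2⟩ := hp
    have ht0 : (0:ℝ) < p.2 := hp2.1
    have hb1 : p.1 ∈ Metric.closedBall y r :=
      Metric.closedBall_subset_closedBall (by linarith) (ball_subset_closedBall hp1)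
    have hb2 : p.1 + p.2 • h ∈ Metric.closedBall y r := by
      rw [mem_closedBall, dist_eq_norm]
      have h1 : ‖p.1 + p.2 • h - y‖ ≤ ‖p.1 - y‖ + ‖p.2 • h‖ := by
        have : p.1 + p.2 • h - y = (p.1 - y) + p.2 • h := by module
        rw [this]; exact norm_add_le _ _
      have h2 : ‖p.2 • h‖ < r / 2 := by
        rw [norm_smul, Real.norm_eq_abs, abs_of_pos ht0]
        exact hth' p.2 hp2
      have h3 : ‖p.1 - y‖ < r / 2 := by rwa [mem_ball, dist_eq_norm] at hp1
      linarith
    have hd := hlip.dist_le_mul _ hb2 _ hb1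
    rw [Real.dist_eq, dist_eq_norm] at hd
    have he : p.1 + p.2 • h - p.1 = p.2 • h := by module
    rw [he, norm_smul, Real.norm_eq_abs, abs_of_pos ht0] at hd
    rw [le_div_iff₀ ht0]
    nlinarith [(abs_le.1 hd).1]
  have hcobdd : IsCoboundedUnder (· ≤ ·) ((𝓝 y) ×ˢ (𝓝[>] (0:ℝ)))
      (fun p : (EuclideanSpace ℝ (Fin n)) × ℝ => (f (p.1 + p.2 • h) - f p.1) / p.2) := by
    have : IsBoundedUnder (· ≥ ·) ((𝓝 y) ×ˢ (𝓝[>] (0:ℝ)))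
        (fun p : (EuclideanSpace ℝ (Fin n)) × ℝ => (f (p.1 + p.2 • h) - f p.1) / p.2) :=
      ⟨-(K * ‖h‖), by simpa [eventually_map] using hlb⟩
    exact this.isCoboundedUnder_le
  exact Filter.limsup_le_of_le hcobdd hub



/-- Eventual bound on the difference quotients from a local Lipschitz bound. -/
lemma aux_ev (f : EuclideanSpace ℝ (Fin n) → ℝ) (y h : EuclideanSpace ℝ (Fin n))
    (K : ℝ≥0) (ρ : ℝ) (hρ : 0 < ρ) (hlip : LipschitzOnWith K f (Metric.closedBall y ρ)) :
    ∀ᶠ p in ((𝓝 y) ×ˢ (𝓝[>] (0:ℝ))),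
      |(f (p.1 + p.2 • h) - f p.1) / p.2| ≤ K * ‖h‖ := by
  have hhpos : (0:ℝ) < ‖h‖ + 1 := by positivity
  have hTmem : Ioo (0:ℝ) (ρ / (2 * (‖h‖ + 1))) ∈ 𝓝[>] (0:ℝ) :=
    Ioo_mem_nhdsGT_of_mem ⟨le_rfl, by positivity⟩
  have hUmem : Metric.ball y (ρ / 2) ∈ 𝓝 y := ball_mem_nhds y (by positivity)
  filter_upwards [prod_mem_prod hUmem hTmem] with p hp
  obtain ⟨hp1, hp2⟩ := hp
  have ht0 : (0:ℝ) < p.2 := hp2.1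
  have hth : p.2 * ‖h‖ < ρ / 2 := by
    calc p.2 * ‖h‖ ≤ p.2 * (‖h‖ + 1) := by nlinarith
      _ < (ρ / (2 * (‖h‖ + 1))) * (‖h‖ + 1) := mul_lt_mul_of_pos_right hp2.2 hhpos
      _ = ρ / 2 := by field_simp
  have hb1 : p.1 ∈ Metric.closedBall y ρ :=
    Metric.closedBall_subset_closedBall (by linarith) (ball_subset_closedBall hp1)
  have hb2 : p.1 + p.2 • h ∈ Metric.closedBall y ρ := by
    rw [mem_closedBall, dist_eq_norm]
    have h1 : ‖p.1 + p.2 • h - y‖ ≤ ‖p.1 - y‖ + ‖p.2 • h‖ := by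
      have : p.1 + p.2 • h - y = (p.1 - y) + p.2 • h := by module
      rw [this]; exact norm_add_le _ _
    have h2 : ‖p.2 • h‖ < ρ / 2 := by
      rw [norm_smul, Real.norm_eq_abs, abs_of_pos ht0]; exact hth
    have h3 : ‖p.1 - y‖ < ρ / 2 := by rwa [mem_ball, dist_eq_norm] at hp1
    linarith
  have hd := hlip.dist_le_mul _ hb2 _ hb1
  rw [Real.dist_eq, dist_eq_norm] at hd
  have he : p.1 + p.2 • h - p.1 = p.2 • h := by module
  rw [he, norm_smul, Real.norm_eq_abs, abs_of_pos ht0] at hd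
  rw [abs_div, abs_of_pos ht0, div_le_iff₀ ht0]
  nlinarith [hd]

/-- The derivative, when it exists, is dominated by the Clarke derivative. -/
lemma aux_easy (f : EuclideanSpace ℝ (Fin n) → ℝ) (hf : LocallyLipschitz f)
    (z h : EuclideanSpace ℝ (Fin n)) (a : StrongDual ℝ (EuclideanSpace ℝ (Fin n)))
    (ha : HasFDerivAt f a z) : a h ≤ clarkeDeriv f z h := by
  obtain ⟨K, V, hV, hlip⟩ := hf z
  obtain ⟨ρ, hρpos, hsub⟩ := Metric.nhds_basis_closedBall.mem_iff.1 hV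
  have hev := aux_ev f z h K ρ hρpos (hlip.mono hsub)
  have hbdd : IsBoundedUnder (· ≤ ·) ((𝓝 z) ×ˢ (𝓝[>] (0:ℝ)))
      (fun p : (EuclideanSpace ℝ (Fin n)) × ℝ => (f (p.1 + p.2 • h) - f p.1) / p.2) :=
    ⟨K * ‖h‖, by simpa [eventually_map] using hev.mono fun p hp => (abs_le.1 hp).2⟩
  -- the difference quotient tends to `a h` along `t ↓ 0` at fixed base point `z`
  have hlineDeriv : HasDerivAt (fun t : ℝ => z + t • h) h 0 := by
    simpa using ((hasDerivAt_id (0:ℝ)).smul_const h).const_add z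
  have hF : HasDerivAt (fun t : ℝ => f (z + t • h)) (a h) 0 := by
    have h0 : z + (0:ℝ) • h = z := by simp
    have ha' : HasFDerivAt f a (z + (0:ℝ) • h) := by rwa [h0]
    exact ha'.comp_hasDerivAt 0 hlineDeriv
  have htend : Tendsto (fun t : ℝ => (f (z + t • h) - f z) / t) (𝓝[>] (0:ℝ)) (𝓝 (a h)) := by
    have h1 := (hasDerivAt_iff_tendsto_slope.1 hF).mono_left
      (nhdsWithin_mono 0 fun t (ht : t ∈ Ioi (0:ℝ)) => (ne_of_gt ht : t ≠ 0))
    apply h1.congr'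
    filter_upwards [self_mem_nhdsWithin] with t (ht : (0:ℝ) < t)
    rw [slope_def_field]
    have : z + (0:ℝ) • h = z := by simp
    rw [this]
    rw [sub_zero]
  -- transfer along the inclusion `pure z ×ˢ 𝓝[>] 0 ≤ 𝓝 z ×ˢ 𝓝[>] 0`
  have hle : (pure z ×ˢ (𝓝[>] (0:ℝ))) ≤ ((𝓝 z) ×ˢ (𝓝[>] (0:ℝ))) :=
    Filter.prod_mono (pure_le_nhds z) le_rfl
  have key : ∀ ε > (0:ℝ), a h - ε ≤ clarkeDeriv f z h := by
    intro ε hε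
    have hev2 : ∀ᶠ t in 𝓝[>] (0:ℝ), a h - ε ≤ (f (z + t • h) - f z) / t := by
      have := htend (Ioi_mem_nhds (show a h - ε < a h by linarith))
      filter_upwards [this] with t ht
      exact le_of_lt ht
    have hev3 : ∀ᶠ p in (pure z ×ˢ (𝓝[>] (0:ℝ))),
        a h - ε ≤ (f (p.1 + p.2 • h) - f p.1) / p.2 := by
      rw [Filter.pure_prod, eventually_map]
      exact hev2
    have hfreq : ∃ᶠ p in ((𝓝 z) ×ˢ (𝓝[>] (0:ℝ))),
        a h - ε ≤ (f (p.1 + p.2 • h) - f p.1) / p.2 :=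
      (hev3.frequently).filter_mono hle
    exact le_limsup_of_frequently_le hfreq hbdd
  by_contra hcon
  push_neg at hcon
  have := key ((a h - clarkeDeriv f z h) / 2) (by linarith)
  linarith

/-- Upper semicontinuity-type statement for the Clarke derivative. -/
lemma aux_usc (f : EuclideanSpace ℝ (Fin n) → ℝ) (hf : LocallyLipschitz f)
    (y h : EuclideanSpace ℝ (Fin n)) (c : ℝ) (hc : clarkeDeriv f y h < c) :
    ∀ᶠ z in 𝓝 y, clarkeDeriv f z h ≤ c := by
  obtain ⟨K, V, hV, hlip⟩ := hf y
  obtain ⟨ρ, hρpos, hsub⟩ := Metric.nhds_basis_closedBall.mem_iff.1 hV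
  have hev := aux_ev f y h K ρ hρpos (hlip.mono hsub)
  have hbdd : IsBoundedUnder (· ≤ ·) ((𝓝 y) ×ˢ (𝓝[>] (0:ℝ)))
      (fun p : (EuclideanSpace ℝ (Fin n)) × ℝ => (f (p.1 + p.2 • h) - f p.1) / p.2) :=
    ⟨K * ‖h‖, by simpa [eventually_map] using hev.mono fun p hp => (abs_le.1 hp).2⟩
  have hevlt := eventually_lt_of_limsup_lt hc hbdd
  rw [Filter.eventually_prod_iff] at hevlt
  obtain ⟨pa, hpa, pb, hpb, H⟩ := hevlt
  have hUy : {x | pa x} ∈ 𝓝 y := hpa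
  have hInt : interior {x | pa x} ∈ 𝓝 y := interior_mem_nhds.2 hUy
  filter_upwards [hInt] with z hz
  -- bound the limsup at z
  obtain ⟨K', V', hV', hlip'⟩ := hf z
  obtain ⟨ρ', hρ'pos, hsub'⟩ := Metric.nhds_basis_closedBall.mem_iff.1 hV'
  have hev' := aux_ev f z h K' ρ' hρ'pos (hlip'.mono hsub')
  have hcob : IsCoboundedUnder (· ≤ ·) ((𝓝 z) ×ˢ (𝓝[>] (0:ℝ)))
      (fun p : (EuclideanSpace ℝ (Fin n)) × ℝ => (f (p.1 + p.2 • h) - f p.1) / p.2) := by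
    have : IsBoundedUnder (· ≥ ·) ((𝓝 z) ×ˢ (𝓝[>] (0:ℝ)))
        (fun p : (EuclideanSpace ℝ (Fin n)) × ℝ => (f (p.1 + p.2 • h) - f p.1) / p.2) :=
      ⟨-(K' * ‖h‖), by simpa [eventually_map] using hev'.mono fun p hp =>
        (neg_le_of_abs_le hp)⟩
    exact this.isCoboundedUnder_le
  apply Filter.limsup_le_of_le hcob
  have hUz : {x | pa x} ∈ 𝓝 z := mem_of_superset (isOpen_interior.mem_nhds hz) interior_subset
  filter_upwards [prod_mem_prod hUz hpb] with p hp
  exact (H hp.1 hp.2).le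

/-- Uniform derivative bound on a compact set. -/
lemma aux_bound (f : EuclideanSpace ℝ (Fin n) → ℝ) (hf : LocallyLipschitz f)
    (s : Set (EuclideanSpace ℝ (Fin n))) (hs : IsCompact s) :
    ∃ K₀ : ℝ≥0, ∀ z ∈ s, ∀ a : StrongDual ℝ (EuclideanSpace ℝ (Fin n)),
      HasFDerivAt f a z → ‖a‖ ≤ K₀ := by
  choose K V hV hlip using hf
  obtain ⟨t, _, ht2⟩ := hs.elim_nhds_subcover (fun z => interior (V z))
    (fun z _ => isOpen_interior.mem_nhds (mem_interior_iff_mem_nhds.2 (hV z)))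
  refine ⟨t.sup K, fun z' hz' a ha => ?_⟩
  obtain ⟨z, hzt, hz'⟩ := mem_iUnion₂.1 (ht2 hz')
  have h1 : ‖a‖ ≤ K z := ha.le_of_lipschitzOn (mem_interior_iff_mem_nhds.1 hz') (hlip z)
  exact h1.trans (NNReal.coe_le_coe.2 (Finset.le_sup hzt))

/-- Every continuous linear functional on the dual of a Euclidean space is an evaluation. -/
lemma aux_eval (φ : StrongDual ℝ (EuclideanSpace ℝ (Fin n)) →L[ℝ] ℝ) :
    ∃ v : EuclideanSpace ℝ (Fin n), ∀ b : StrongDual ℝ (EuclideanSpace ℝ (Fin n)), φ b = b v := by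
  set e : Fin n → EuclideanSpace ℝ (Fin n) := fun i => PiLp.basisFun 2 ℝ (Fin n) i with he
  set pr : Fin n → StrongDual ℝ (EuclideanSpace ℝ (Fin n)) := fun i => EuclideanSpace.proj i with hpr
  have hz : ∀ z : EuclideanSpace ℝ (Fin n), ∑ i, z i • e i = z := by
    intro z
    have := (PiLp.basisFun 2 ℝ (Fin n)).sum_repr z
    simpa [he, PiLp.basisFun_repr] using this
  refine ⟨∑ i, φ (pr i) • e i, fun b => ?_⟩
  have hb : b = ∑ i, b (e i) • pr i := by
    ext z
    rw [ContinuousLinearMap.sum_apply]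
    simp only [ContinuousLinearMap.smul_apply, hpr, PiLp.proj_apply, smul_eq_mul]
    conv_lhs => rw [← hz z]
    rw [map_sum]
    refine Finset.sum_congr rfl fun i _ => ?_
    rw [b.map_smul, smul_eq_mul, mul_comm]
  calc φ b = φ (∑ i, b (e i) • pr i) := by rw [← hb]
    _ = ∑ i, b (e i) * φ (pr i) := by rw [map_sum]; simp [smul_eq_mul]
    _ = b (∑ i, φ (pr i) • e i) := by
        rw [map_sum]
        refine Finset.sum_congr rfl fun i _ => ?_
        rw [b.map_smul, smul_eq_mul, mul_comm]


/-- Lemma C: there is a limit of gradients dominating the Clarke derivative. -/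
lemma aux_lemC (f : EuclideanSpace ℝ (Fin n) → ℝ) (hf : LocallyLipschitz f)
    (x y h : EuclideanSpace ℝ (Fin n)) (ε : ℝ) (hy : y ∈ Metric.closedBall x ε)
    (K₀ : ℝ≥0)
    (hbd : ∀ z ∈ Metric.closedBall x (ε + 1), ∀ a : StrongDual ℝ (EuclideanSpace ℝ (Fin n)),
      HasFDerivAt f a z → ‖a‖ ≤ K₀) :
    ∃ b ∈ ⋂ k : ℕ, closure {a : StrongDual ℝ (EuclideanSpace ℝ (Fin n)) |
        ∃ y' ∈ Metric.closedBall x (ε + 1 / (k + 1)), HasFDerivAt f a y'},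
      clarkeDeriv f y h ≤ b h := by
  obtain ⟨K, V, hV, hlip⟩ := hf y
  obtain ⟨ρ₀, hρ₀, hsubV⟩ := Metric.nhds_basis_closedBall.mem_iff.1 hV
  have hstep : ∀ j : ℕ, ∃ z : EuclideanSpace ℝ (Fin n),
      ∃ aj : StrongDual ℝ (EuclideanSpace ℝ (Fin n)),
      z ∈ Metric.ball y (min ρ₀ (1 / (j + 1))) ∧ HasFDerivAt f aj z ∧
        clarkeDeriv f y h - 1 / (j + 1) < aj h := by
    intro j
    by_contra hcon
    push_neg at hcon
    have hjpos : (0:ℝ) < 1 / ((j:ℝ) + 1) := by positivity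
    have hminpos : 0 < min ρ₀ (1 / ((j:ℝ) + 1)) := lt_min hρ₀ hjpos
    have hkey := aux_lemA f y h (clarkeDeriv f y h - 1 / (j + 1)) (min ρ₀ (1 / (j + 1))) K
      hminpos
      (hlip.mono ((Metric.closedBall_subset_closedBall (min_le_left _ _)).trans hsubV))
      (fun z hz a ha => hcon z a hz ha)
    linarith
  choose z aj hz hda hlb using hstep
  have hzy : ∀ j : ℕ, dist (z j) y < min ρ₀ (1 / ((j:ℝ) + 1)) := fun j => hz j
  have hone : ∀ j : ℕ, (1:ℝ) / ((j:ℝ) + 1) ≤ 1 := by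
    intro j
    rw [div_le_one (by positivity)]
    have : (0:ℝ) ≤ (j:ℝ) := Nat.cast_nonneg j
    linarith
  have hzx : ∀ j, z j ∈ Metric.closedBall x (ε + 1) := by
    intro j
    rw [Metric.mem_closedBall]
    have h2 : dist y x ≤ ε := hy
    have h3 : min ρ₀ (1 / ((j:ℝ) + 1)) ≤ 1 := (min_le_right _ _).trans (hone j)
    calc dist (z j) x ≤ dist (z j) y + dist y x := dist_triangle _ _ _
      _ ≤ min ρ₀ (1 / ((j:ℝ) + 1)) + ε := by
          have := hzy j; linarith
      _ ≤ ε + 1 := by linarith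
  have haj : ∀ j, aj j ∈ Metric.closedBall (0 : StrongDual ℝ (EuclideanSpace ℝ (Fin n))) K₀ := by
    intro j
    rw [mem_closedBall_zero_iff]
    exact hbd (z j) (hzx j) (aj j) (hda j)
  obtain ⟨b, _, σ, hσ, hbt⟩ :=
    (isCompact_closedBall (0 : StrongDual ℝ (EuclideanSpace ℝ (Fin n))) K₀).tendsto_subseq haj
  have hmono : ∀ j : ℕ, (1:ℝ) / ((σ j : ℝ) + 1) ≤ 1 / ((j:ℝ) + 1) := by
    intro j
    apply one_div_le_one_div_of_le (by positivity)
    have := hσ.le_apply (x := j)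
    exact_mod_cast Nat.add_le_add_right this 1
  refine ⟨b, Set.mem_iInter.2 fun k => ?_, ?_⟩
  · apply mem_closure_of_tendsto hbt
    rw [eventually_atTop]
    refine ⟨k, fun j hj => ⟨z (σ j), ?_, hda (σ j)⟩⟩
    rw [Metric.mem_closedBall]
    have h2 : dist y x ≤ ε := hy
    have hjk : (1:ℝ) / ((j:ℝ) + 1) ≤ 1 / ((k:ℝ) + 1) := by
      apply one_div_le_one_div_of_le (by positivity)
      exact_mod_cast Nat.add_le_add_right hj 1
    calc dist (z (σ j)) x ≤ dist (z (σ j)) y + dist y x := dist_triangle _ _ _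
      _ ≤ min ρ₀ (1 / ((σ j : ℝ) + 1)) + ε := by
          have := hzy (σ j); linarith
      _ ≤ 1 / ((σ j : ℝ) + 1) + ε := by
          have := min_le_right ρ₀ (1 / ((σ j : ℝ) + 1)); linarith
      _ ≤ ε + 1 / ((k:ℝ) + 1) := by
          have h4 := hmono j
          linarith
  · have heval : Tendsto (fun j => (aj (σ j)) h) atTop (𝓝 (b h)) := by
      have := ((ContinuousLinearMap.apply ℝ ℝ h).continuous.tendsto b).comp hbt
      exact this
    have hlow : Tendsto (fun j : ℕ => clarkeDeriv f y h - 1 / ((j:ℝ) + 1)) atTop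
        (𝓝 (clarkeDeriv f y h)) := by
      have := (tendsto_const_nhds : Tendsto (fun _ : ℕ => clarkeDeriv f y h) atTop
        (𝓝 (clarkeDeriv f y h))).sub (tendsto_one_div_add_atTop_nhds_zero_nat)
      simpa using this
    apply le_of_tendsto_of_tendsto' hlow heval
    intro j
    have h1 := hlb (σ j)
    have h2 := hmono j
    linarith


/-- Corollary 2.4: Goldstein's ε-generalized gradient coincides with the gradient of
`f` on the closed ball `B̄_ε(x)`. -/
theorem goldsteinGrad_eq_setGradCl_closedBall
    (n : ℕ) (f : EuclideanSpace ℝ (Fin n) → ℝ) (hf : LocallyLipschitz f)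
    (x : EuclideanSpace ℝ (Fin n)) (ε : ℝ) (hε : 0 ≤ ε) :
    goldsteinGrad f ε x = setGradCl f (Metric.closedBall x ε) := by
  classical
  set L : Set (StrongDual ℝ (EuclideanSpace ℝ (Fin n))) := ⋂ k : ℕ,
    closure {a : StrongDual ℝ (EuclideanSpace ℝ (Fin n)) |
      ∃ y ∈ Metric.closedBall x (ε + 1 / (k + 1)), HasFDerivAt f a y} with hL
  have hgold : goldsteinGrad f ε x = convexHull ℝ L := rfl
  obtain ⟨K₀, hK₀⟩ := aux_bound f hf (Metric.closedBall x (ε + 1))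
    (isCompact_closedBall x (ε + 1))
  have hone : ∀ k : ℕ, (1:ℝ) / ((k:ℝ) + 1) ≤ 1 := by
    intro k
    rw [div_le_one (by positivity)]
    have : (0:ℝ) ≤ (k:ℝ) := Nat.cast_nonneg k
    linarith
  -- L is compact
  have hLsubB : L ⊆ Metric.closedBall (0 : StrongDual ℝ (EuclideanSpace ℝ (Fin n))) K₀ := by
    intro a ha
    have h0 := Set.mem_iInter.1 ha 0
    have hsub : {a : StrongDual ℝ (EuclideanSpace ℝ (Fin n)) |
        ∃ y ∈ Metric.closedBall x (ε + 1 / ((0:ℕ) + 1)), HasFDerivAt f a y} ⊆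
        Metric.closedBall 0 K₀ := by
      rintro a' ⟨y', hy', hd⟩
      rw [mem_closedBall_zero_iff]
      refine hK₀ y' ?_ a' hd
      have : ε + 1 / ((0:ℕ) + 1) = ε + 1 := by norm_num
      rwa [this] at hy'
    exact closure_minimal hsub Metric.isClosed_closedBall h0
  have hLclosed : IsClosed L := isClosed_iInter fun k => isClosed_closure
  have hLcompact : IsCompact L :=
    Metric.isCompact_of_isClosed_isBounded hLclosed
      (Metric.isBounded_closedBall.subset hLsubB)
  have hHullCompact : IsCompact (convexHull ℝ L) := aux_isCompact_convexHull hLcompact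
  have hHullClosed : IsClosed (convexHull ℝ L) := hHullCompact.isClosed
  -- each Clarke gradient on the ball is inside the hull of L
  have hUnion_sub : (⋃ y ∈ Metric.closedBall x ε, clarkeGrad f y) ⊆ convexHull ℝ L := by
    intro a ha
    rw [Set.mem_iUnion₂] at ha
    obtain ⟨y, hy, hay⟩ := ha
    by_contra hna
    obtain ⟨φ, u, hφ1, hφ2⟩ := geometric_hahn_banach_closed_point
      (convex_convexHull ℝ L) hHullClosed hna
    obtain ⟨h, hh⟩ := aux_eval φ
    obtain ⟨b, hbL, hbh⟩ := aux_lemC f hf x y h ε hy K₀ hK₀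
    have h1 : φ b < u := hφ1 b (subset_convexHull ℝ L hbL)
    rw [hh b] at h1
    rw [hh a] at hφ2
    have h2 : a h ≤ clarkeDeriv f y h := hay h
    linarith
  -- each element of L lies in some Clarke gradient on the ball
  have hLsub : L ⊆ ⋃ y ∈ Metric.closedBall x ε, clarkeGrad f y := by
    intro a haL
    have hsel : ∀ k : ℕ, ∃ bk : StrongDual ℝ (EuclideanSpace ℝ (Fin n)),
        (∃ yk ∈ Metric.closedBall x (ε + 1 / (k + 1)), HasFDerivAt f bk yk) ∧
        dist a bk < 1 / (k + 1) := by
      intro k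
      have h0 := Set.mem_iInter.1 haL k
      rw [Metric.mem_closure_iff] at h0
      obtain ⟨bk, hbk, hdist⟩ := h0 (1 / (k + 1)) (by positivity)
      exact ⟨bk, hbk, hdist⟩
    choose bk hbk hdist using hsel
    choose yk hyk hdk using hbk
    have hykball : ∀ k, yk k ∈ Metric.closedBall x (ε + 1) := fun k =>
      Metric.closedBall_subset_closedBall (by have := hone k; linarith) (hyk k)
    obtain ⟨y, _, σ, hσ, hyt⟩ := (isCompact_closedBall x (ε + 1)).tendsto_subseq hykball
    have hmono : ∀ j : ℕ, (1:ℝ) / ((σ j : ℝ) + 1) ≤ 1 / ((j:ℝ) + 1) := by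
      intro j
      apply one_div_le_one_div_of_le (by positivity)
      have := hσ.le_apply (x := j)
      exact_mod_cast Nat.add_le_add_right this 1
    have hyε : y ∈ Metric.closedBall x ε := by
      rw [Metric.mem_closedBall]
      have hdy : Tendsto (fun j => dist ((yk ∘ σ) j) x) atTop (𝓝 (dist y x)) :=
        hyt.dist tendsto_const_nhds
      have hεlim : Tendsto (fun j : ℕ => ε + 1 / ((j:ℝ) + 1)) atTop (𝓝 ε) := by
        have := (tendsto_const_nhds : Tendsto (fun _ : ℕ => ε) atTop (𝓝 ε)).add
          (tendsto_one_div_add_atTop_nhds_zero_nat)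
        simpa using this
      apply le_of_tendsto_of_tendsto' hdy hεlim
      intro j
      have h1 : dist (yk (σ j)) x ≤ ε + 1 / ((σ j : ℝ) + 1) := hyk (σ j)
      have h2 := hmono j
      calc dist ((yk ∘ σ) j) x = dist (yk (σ j)) x := rfl
        _ ≤ ε + 1 / ((σ j : ℝ) + 1) := h1
        _ ≤ ε + 1 / ((j:ℝ) + 1) := by linarith
    rw [Set.mem_iUnion₂]
    refine ⟨y, hyε, ?_⟩
    intro h
    -- a h ≤ clarkeDeriv f y h
    have hbtend : Tendsto (fun k => bk k) atTop (𝓝 a) := by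
      rw [tendsto_iff_dist_tendsto_zero]
      have hb : ∀ k : ℕ, dist (bk k) a ≤ 1 / ((k:ℝ) + 1) := fun k => by
        rw [dist_comm]
        exact (hdist k).le
      exact squeeze_zero (fun k => dist_nonneg) hb
        tendsto_one_div_add_atTop_nhds_zero_nat
    have heval : Tendsto (fun j => (bk (σ j)) h) atTop (𝓝 (a h)) := by
      have := ((ContinuousLinearMap.apply ℝ ℝ h).continuous.tendsto a).comp
        (hbtend.comp hσ.tendsto_atTop)
      exact this
    refine le_of_forall_pos_le_add ?_
    intro ε' hε'
    have husc := aux_usc f hf y h (clarkeDeriv f y h + ε') (by linarith)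
    have hev2 : ∀ᶠ j in atTop, clarkeDeriv f (yk (σ j)) h ≤ clarkeDeriv f y h + ε' := by
      have := hyt.eventually husc
      simpa [Function.comp] using this
    have hle : ∀ᶠ j in atTop, (bk (σ j)) h ≤ clarkeDeriv f y h + ε' := by
      filter_upwards [hev2] with j hj
      exact (aux_easy f hf (yk (σ j)) h (bk (σ j)) (hdk (σ j))).trans hj
    exact le_of_tendsto heval hle
  -- conclude
  apply Set.Subset.antisymm
  · rw [hgold]
    apply convexHull_min
    · exact hLsub.trans ((subset_convexHull ℝ _).trans subset_closure)
    · exact (convex_convexHull ℝ _).closure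
  · exact closure_minimal (convexHull_min hUnion_sub (convex_convexHull ℝ L)) hHullClosed

end Auxiliary
end

section
/- Let f : X → ℝ be locally Lipschitz continuous and suppose 0 ∉ ∂f(x) for some x ∈ X. Then there exist ε > 0 and h ∈ X with ‖h‖ = 1 such that for every nonempty A ⊂ B_ε(x) and every a ∈ ∂f(A): −‖a‖ ≤ ⟨a,h⟩ ≤ f⁰(A;h) < 0. -/
open Filter Metric Set NormedSpace
open scoped NNReal Topology

variable {X : Type*} [NormedAddCommGroup X] [NormedSpace ℝ X]

/-- Proposition 2.6: if `0 ∉ ∂f(x)`, then there exist `ε > 0` and a unit vector `h`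
with `−‖a‖ ≤ ⟨a,h⟩ ≤ f⁰(A;h) < 0` for all `A ⊆ B_ε(x)` and all `a ∈ ∂f(A)`. -/
theorem exists_unit_descent_direction_near
    [CompleteSpace X] (f : X → ℝ) (hf : LocallyLipschitz f) (x : X)
    (h0 : (0 : StrongDual ℝ X) ∉ clarkeGrad f x) :
    ∃ ε > (0 : ℝ), ∃ h : X, ‖h‖ = 1 ∧
      ∀ A : Set X, A.Nonempty → A ⊆ Metric.ball x ε →
        setDeriv f A h < 0 ∧
        ∀ a ∈ setGrad f A, -‖a‖ ≤ a h ∧ a h ≤ setDeriv f A h := by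
  classical
  -- a direction with negative Clarke derivative at `x`
  obtain ⟨h₀, hL⟩ : ∃ h₀ : X, clarkeDeriv f x h₀ < 0 := by
    by_contra hc
    push_neg at hc
    exact h0 (fun v => by simpa using hc v)
  -- local Lipschitz data around `x`
  obtain ⟨K, s, hs, hK⟩ := hf x
  obtain ⟨ρ, hρ, hball⟩ := Metric.mem_nhds_iff.mp hs
  -- `h₀ ≠ 0`
  have hzero : clarkeDeriv f x (0 : X) = 0 := by
    unfold clarkeDeriv
    have hfun : (fun p : X × ℝ => (f (p.1 + p.2 • (0 : X)) - f p.1) / p.2)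
        = fun _ => (0 : ℝ) := by
      funext p; simp
    rw [hfun, limsup_const]
  have hh0 : h₀ ≠ 0 := by
    rintro rfl
    rw [hzero] at hL
    exact lt_irrefl _ hL
  set c : ℝ := ‖h₀‖⁻¹ with hcdef
  have hc : 0 < c := inv_pos.mpr (norm_pos_iff.mpr hh0)
  set h : X := c • h₀ with hhdef
  have hnorm : ‖h‖ = 1 := by
    rw [hhdef, norm_smul, Real.norm_eq_abs, abs_of_pos hc, hcdef,
      inv_mul_cancel₀ (norm_ne_zero_iff.mpr hh0)]
  -- uniform bound on difference quotients near `x`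
  have hbdd : ∀ y ∈ ball x (ρ / 2), ∀ v : X, ∀ᶠ p in (𝓝 y ×ˢ 𝓝[>] (0 : ℝ)),
      |(f (p.1 + p.2 • v) - f p.1) / p.2| ≤ (K : ℝ) * ‖v‖ := by
    intro y hy v
    have h1 : ∀ᶠ z in 𝓝 y, z ∈ ball x (ρ / 2) := isOpen_ball.eventually_mem hy
    have hδ : (0 : ℝ) < (ρ / 2) / (‖v‖ + 1) := by positivity
    have h2 : ∀ᶠ t in 𝓝[>] (0 : ℝ), t ∈ Ioo (0 : ℝ) ((ρ / 2) / (‖v‖ + 1)) :=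
      Filter.eventually_of_mem (Ioo_mem_nhdsGT_of_mem ⟨le_refl _, hδ⟩) (fun _ ht => ht)
    filter_upwards [h1.prod_inl (𝓝[>] (0 : ℝ)), h2.prod_inr (𝓝 y)] with p hp1 hp2
    have ht0 : 0 < p.2 := hp2.1
    have hmem1 : p.1 ∈ s := hball (mem_ball.mpr (lt_of_lt_of_le (mem_ball.mp hp1) (by linarith)))
    have hnv : ‖p.2 • v‖ < ρ / 2 := by
      rw [norm_smul, Real.norm_eq_abs, abs_of_pos ht0]
      calc p.2 * ‖v‖ ≤ p.2 * (‖v‖ + 1) := by nlinarith [norm_nonneg v]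
        _ < ((ρ / 2) / (‖v‖ + 1)) * (‖v‖ + 1) := by
            apply mul_lt_mul_of_pos_right hp2.2 (by positivity)
        _ = ρ / 2 := by field_simp
    have hmem2 : p.1 + p.2 • v ∈ s := by
      apply hball
      rw [mem_ball]
      calc dist (p.1 + p.2 • v) x ≤ dist (p.1 + p.2 • v) p.1 + dist p.1 x := dist_triangle _ _ _
        _ < ρ / 2 + ρ / 2 := by
            apply add_lt_add _ (mem_ball.mp hp1)
            rw [dist_eq_norm, add_sub_cancel_left]
            exact hnv
        _ = ρ := by ring
    have hdq : |f (p.1 + p.2 • v) - f p.1| ≤ (K : ℝ) * (p.2 * ‖v‖) := by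
      have := hK.dist_le_mul _ hmem2 _ hmem1
      rw [Real.dist_eq, dist_eq_norm, add_sub_cancel_left, norm_smul, Real.norm_eq_abs,
        abs_of_pos ht0] at this
      exact this
    rw [abs_div, abs_of_pos ht0, div_le_iff₀ ht0]
    calc |f (p.1 + p.2 • v) - f p.1| ≤ (K : ℝ) * (p.2 * ‖v‖) := hdq
      _ = (K : ℝ) * ‖v‖ * p.2 := by ring
  have hρ2 : (0 : ℝ) < ρ / 2 := by linarith
  have hIsBdd : ∀ y ∈ ball x (ρ / 2), ∀ v : X,
      IsBoundedUnder (· ≤ ·) (𝓝 y ×ˢ 𝓝[>] (0 : ℝ))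
        (fun p : X × ℝ => (f (p.1 + p.2 • v) - f p.1) / p.2) := by
    intro y hy v
    refine ⟨(K : ℝ) * ‖v‖, eventually_map.mpr ?_⟩
    filter_upwards [hbdd y hy v] with p hp using le_trans (le_abs_self _) hp
  have hCobdd : ∀ y ∈ ball x (ρ / 2), ∀ v : X,
      IsCoboundedUnder (· ≤ ·) (𝓝 y ×ˢ 𝓝[>] (0 : ℝ))
        (fun p : X × ℝ => (f (p.1 + p.2 • v) - f p.1) / p.2) := by
    intro y hy v
    apply isCoboundedUnder_le_of_eventually_le (𝓝 y ×ˢ 𝓝[>] (0 : ℝ)) (x := -((K : ℝ) * ‖v‖))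
    filter_upwards [hbdd y hy v] with p hp using neg_le_of_abs_le hp
  -- upper semicontinuity: quotients for `h₀` are eventually below `r` near `x`
  set r : ℝ := clarkeDeriv f x h₀ / 2 with hrdef
  have hrneg : r < 0 := by rw [hrdef]; linarith
  have hLr : clarkeDeriv f x h₀ < r := by rw [hrdef]; linarith
  have hev : ∀ᶠ p in (𝓝 x ×ˢ 𝓝[>] (0 : ℝ)),
      (f (p.1 + p.2 • h₀) - f p.1) / p.2 < r :=
    eventually_lt_of_limsup_lt hLr (hIsBdd x (mem_ball_self hρ2) h₀)
  obtain ⟨U, hU, V, hV, hUV⟩ := Filter.mem_prod_iff.mp hev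
  obtain ⟨ε₁, hε₁, hUb⟩ := Metric.mem_nhds_iff.mp hU
  obtain ⟨τ, hτ, hVb⟩ := mem_nhdsGT_iff_exists_Ioo_subset.mp hV
  have hτ' : (0 : ℝ) < τ := hτ
  set ε : ℝ := min ε₁ ρ / 2 with hεdef
  have hε : 0 < ε := by
    have : 0 < min ε₁ ρ := lt_min hε₁ hρ
    rw [hεdef]; linarith
  refine ⟨ε, hε, h, hnorm, ?_⟩
  have key : ∀ y ∈ ball x ε, clarkeDeriv f y h ≤ c * r := by
    intro y hy
    have hερ : ε ≤ ρ / 2 := by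
      rw [hεdef]
      have : min ε₁ ρ ≤ ρ := min_le_right _ _
      linarith
    have hysmall : y ∈ ball x (ρ / 2) := mem_ball.mpr (lt_of_lt_of_le (mem_ball.mp hy) hερ)
    apply limsup_le_of_le (hCobdd y hysmall h)
    have h1 : ∀ᶠ z in 𝓝 y, z ∈ U := by
      apply Filter.eventually_of_mem (ball_mem_nhds y hε)
      intro z hz
      apply hUb
      rw [mem_ball]
      calc dist z x ≤ dist z y + dist y x := dist_triangle _ _ _
        _ < ε + ε := add_lt_add (mem_ball.mp hz) (mem_ball.mp hy)
        _ ≤ ε₁ := by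
            have : min ε₁ ρ ≤ ε₁ := min_le_left _ _
            rw [hεdef]; linarith
    have h2 : ∀ᶠ t in 𝓝[>] (0 : ℝ), t ∈ Ioo (0 : ℝ) (τ / c) :=
      Filter.eventually_of_mem
        (Ioo_mem_nhdsGT_of_mem ⟨le_refl _, by positivity⟩) (fun _ ht => ht)
    filter_upwards [h1.prod_inl (𝓝[>] (0 : ℝ)), h2.prod_inr (𝓝 y)] with p hp1 hp2
    have ht0 : 0 < p.2 := hp2.1
    have hctp : c * p.2 ∈ V := hVb ⟨by positivity, (lt_div_iff₀' hc).mp hp2.2⟩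
    have hlt : (f (p.1 + (c * p.2) • h₀) - f p.1) / (c * p.2) < r :=
      hUV (Set.mk_mem_prod hp1 hctp)
    have hq : (f (p.1 + p.2 • h) - f p.1) / p.2
        = c * ((f (p.1 + (c * p.2) • h₀) - f p.1) / (c * p.2)) := by
      rw [show p.2 • h = (c * p.2) • h₀ from by rw [hhdef, smul_smul, mul_comm]]
      field_simp
    rw [hq]
    exact mul_le_mul_of_nonneg_left hlt.le hc.le
  -- conclusion
  intro A hA hAsub
  have himg : ((fun y => clarkeDeriv f y h) '' A).Nonempty := hA.image _
  have hub : ∀ z ∈ (fun y => clarkeDeriv f y h) '' A, z ≤ c * r := by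
    rintro z ⟨y, hy, rfl⟩
    exact key y (hAsub hy)
  have hM : setDeriv f A h ≤ c * r := csSup_le himg hub
  have hMneg : setDeriv f A h < 0 := lt_of_le_of_lt hM (mul_neg_of_pos_of_neg hc hrneg)
  refine ⟨hMneg, fun a ha => ?_⟩
  have hah : a h ≤ setDeriv f A h := by
    have hsub : (⋃ y ∈ A, clarkeGrad f y) ⊆ {b : StrongDual ℝ X | b h ≤ setDeriv f A h} := by
      intro b hb
      simp only [mem_iUnion] at hb
      obtain ⟨y, hy, hby⟩ := hb
      exact le_trans (hby h) (le_csSup ⟨c * r, hub⟩ ⟨y, hy, rfl⟩)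
    have hlin : IsLinearMap ℝ (fun b : StrongDual ℝ X => b h) :=
      ⟨fun a b => by simp, fun t a => by simp⟩
    have hconv : convexHull ℝ (⋃ y ∈ A, clarkeGrad f y)
        ⊆ {b : StrongDual ℝ X | b h ≤ setDeriv f A h} :=
      convexHull_min hsub (convex_halfSpace_le hlin _)
    have hclosed : IsClosed {b : WeakDual ℝ X | b h ≤ setDeriv f A h} :=
      IsClosed.preimage (WeakDual.eval_continuous h) isClosed_Iic
    have himage : (StrongDual.toWeakDual (𝕜 := ℝ) (E := X)) ''
        (convexHull ℝ (⋃ y ∈ A, clarkeGrad f y))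
        ⊆ {b : WeakDual ℝ X | b h ≤ setDeriv f A h} := by
      rintro _ ⟨b, hb, rfl⟩
      simpa using hconv hb
    exact closure_minimal himage hclosed ha
  refine ⟨?_, hah⟩
  have habs : |a h| ≤ ‖a‖ := by
    have := a.le_opNorm h
    rwa [hnorm, mul_one] at this
  calc -‖a‖ ≤ -|a h| := neg_le_neg habs
    _ ≤ a h := neg_abs_le _
end
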